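/- arXiv:2507.17999 — 8 statements merged into one kernel-verified Lean document; each statement's English description precedes it below -/
import Mathlib

section
/- Let B_1,...,B_4 be independent Bernoulli random variables with success probabilities p_1,...,p_4 ∈ [0,1] satisfying p_1+p_2+p_3+p_4 = 2. Then the probability that B_1+B_2+B_3+B_4 is even is at least 13/27. -/
open Finset

private lemma bern_helper (x y z : ℝ) (hx : 0 ≤ x) (hy : 0 ≤ y) (hz : 0 ≤ z)
    (h : x + y + z ≤ 1) : (x + y + z) * (x * y * z) ≤ 1/27 := by
  have h3 : 27 * (x * y * z) ≤ (x + y + z)^3 := by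
    nlinarith [mul_nonneg hz (sq_nonneg (x - y)), mul_nonneg hx (sq_nonneg (y - z)),
      mul_nonneg hy (sq_nonneg (x - z))]
  have hs : 0 ≤ x + y + z := by linarith
  have h4 : (x + y + z)^4 ≤ 1 := by
    calc (x+y+z)^4 ≤ 1^4 := by gcongr
    _ = 1 := by norm_num
  nlinarith [mul_le_mul_of_nonneg_left h3 hs]

private lemma bern_key (a b c d : ℝ) (ha' : a ≤ 1) (hb' : b ≤ 1) (hc' : c ≤ 1) (hd' : d ≤ 1)
    (ha : -1 ≤ a) (hb : -1 ≤ b) (hc : -1 ≤ c) (hd : -1 ≤ d)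
    (h : a + b + c + d = 0) : -1/27 ≤ a * b * c * d := by
  rcases le_or_gt 0 a with pa | na <;> rcases le_or_gt 0 b with pb | nb <;>
    rcases le_or_gt 0 c with pc | nc <;> rcases le_or_gt 0 d with pd | nd
  · nlinarith [mul_nonneg (mul_nonneg pa pb) (mul_nonneg pc pd)]
  · have := bern_helper a b c pa pb pc (by linarith)
    nlinarith
  · have := bern_helper a b d pa pb pd (by linarith)
    nlinarith
  · nlinarith [mul_nonneg (mul_nonneg pa pb)
      (mul_nonneg (neg_nonneg.2 nc.le) (neg_nonneg.2 nd.le))]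
  · have := bern_helper a c d pa pc pd (by linarith)
    nlinarith
  · nlinarith [mul_nonneg (mul_nonneg pa pc)
      (mul_nonneg (neg_nonneg.2 nb.le) (neg_nonneg.2 nd.le))]
  · nlinarith [mul_nonneg (mul_nonneg pa pd)
      (mul_nonneg (neg_nonneg.2 nb.le) (neg_nonneg.2 nc.le))]
  · have := bern_helper (-b) (-c) (-d) (by linarith) (by linarith) (by linarith) (by linarith)
    nlinarith
  · have := bern_helper b c d pb pc pd (by linarith)
    nlinarith
  · nlinarith [mul_nonneg (mul_nonneg pb pc)
      (mul_nonneg (neg_nonneg.2 na.le) (neg_nonneg.2 nd.le))]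
  · nlinarith [mul_nonneg (mul_nonneg pb pd)
      (mul_nonneg (neg_nonneg.2 na.le) (neg_nonneg.2 nc.le))]
  · have := bern_helper (-a) (-c) (-d) (by linarith) (by linarith) (by linarith) (by linarith)
    nlinarith
  · nlinarith [mul_nonneg (mul_nonneg pc pd)
      (mul_nonneg (neg_nonneg.2 na.le) (neg_nonneg.2 nb.le))]
  · have := bern_helper (-a) (-b) (-d) (by linarith) (by linarith) (by linarith) (by linarith)
    nlinarith
  · have := bern_helper (-a) (-b) (-c) (by linarith) (by linarith) (by linarith) (by linarith)
    nlinarith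
  · linarith

/-- The probability that the sum of independent Bernoulli random variables with success
probabilities `p i` lands in the parity/value class described by the filter. Here we sum,
over all subsets `S` of indices (the set of indices whose Bernoulli equals 1), the product
of `p i` for `i ∈ S` and `1 - p i` for `i ∉ S`. -/
noncomputable def bernoulliProb {n : ℕ} (p : Fin n → ℝ) (P : ℕ → Prop) [DecidablePred P] : ℝ :=
  ∑ S ∈ Finset.univ.powerset.filter (fun S : Finset (Fin n) => P S.card),
    (∏ i ∈ S, p i) * ∏ i ∈ Sᶜ, (1 - p i)

private lemma bern_eq (p : Fin 4 → ℝ) :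
    bernoulliProb p (fun k => Even k) = (1 + ∏ i, (1 - 2 * p i)) / 2 := by
  have h : (Finset.univ.powerset.filter (fun S : Finset (Fin 4) => Even S.card))
      = {∅, {0,1}, {0,2}, {0,3}, {1,2}, {1,3}, {2,3}, {0,1,2,3}} := by decide
  have c1 : ((∅ : Finset (Fin 4))ᶜ) = {0,1,2,3} := by decide
  have c2 : (({0,1} : Finset (Fin 4))ᶜ) = {2,3} := by decide
  have c3 : (({0,2} : Finset (Fin 4))ᶜ) = {1,3} := by decide
  have c4 : (({0,3} : Finset (Fin 4))ᶜ) = {1,2} := by decide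
  have c5 : (({1,2} : Finset (Fin 4))ᶜ) = {0,3} := by decide
  have c6 : (({1,3} : Finset (Fin 4))ᶜ) = {0,2} := by decide
  have c7 : (({2,3} : Finset (Fin 4))ᶜ) = {0,1} := by decide
  have c8 : (({0,1,2,3} : Finset (Fin 4))ᶜ) = ∅ := by decide
  rw [bernoulliProb, h]
  simp (config := { decide := true }) only [Finset.sum_insert, Finset.mem_insert,
    Finset.mem_singleton, Finset.sum_singleton, c1, c2, c3, c4, c5, c6, c7, c8,
    Finset.prod_insert, Finset.prod_singleton, Finset.prod_empty, Fin.prod_univ_four]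
  ring

/-- If `B_1, …, B_4` are independent Bernoulli random variables with success probabilities
`p_1, …, p_4 ∈ [0,1]` summing to `2`, then the probability that `B_1 + B_2 + B_3 + B_4`
is even is at least `13/27`. -/
theorem bernoulli_even_prob_ge (p : Fin 4 → ℝ)
    (h0 : ∀ i, 0 ≤ p i) (h1 : ∀ i, p i ≤ 1) (hsum : ∑ i, p i = 2) :
    (13 : ℝ) / 27 ≤ bernoulliProb p (fun k => Even k) := by
  rw [bern_eq]
  have hq : (1 - 2 * p 0) + (1 - 2 * p 1) + (1 - 2 * p 2) + (1 - 2 * p 3) = 0 := by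
    rw [Fin.sum_univ_four] at hsum; linarith
  have key := bern_key (1 - 2 * p 0) (1 - 2 * p 1) (1 - 2 * p 2) (1 - 2 * p 3)
    (by have := h0 0; linarith) (by have := h0 1; linarith)
    (by have := h0 2; linarith) (by have := h0 3; linarith)
    (by have := h1 0; linarith) (by have := h1 1; linarith)
    (by have := h1 2; linarith) (by have := h1 3; linarith) hq
  rw [Fin.prod_univ_four]
  linarith
end

section
/- Let g : {0,1,...,n} → ℝ and let 0 ≤ q ≤ n. Among all tuples (p_1,...,p_n) ∈ [0,1]^n with Σ p_i = q, there is a minimizer of E[g(B_1+...+B_n)] (where B_i are independent Bernoullis with success probabilities p_i) in which every p_i lies in {0, x, 1} for some common value x ∈ (0,1). -/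
open Finset

/-- The expectation `E[g(B_1 + ⋯ + B_n)]` for independent Bernoulli random variables with
success probabilities `p i`. -/
noncomputable def bernExp {n : ℕ} (p : Fin n → ℝ) (g : ℕ → ℝ) : ℝ :=
  ∑ S ∈ (Finset.univ : Finset (Fin n)).powerset,
    ((∏ i ∈ S, p i) * ∏ i ∈ Sᶜ, (1 - p i)) * g S.card

lemma bernExp_decomp {n : ℕ} (p : Fin n → ℝ) (g : ℕ → ℝ) (i j : Fin n) (hij : i ≠ j) :
    bernExp p g = ∑ S ∈ ((univ : Finset (Fin n)) \ {i, j}).powerset,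
      ((∏ k ∈ S, p k) * ∏ k ∈ ((univ : Finset (Fin n)) \ {i, j}) \ S, (1 - p k)) *
        ((1 - p i) * (1 - p j) * g S.card + p i * (1 - p j) * g (S.card + 1)
          + p j * (1 - p i) * g (S.card + 1) + p i * p j * g (S.card + 2)) := by
  set R : Finset (Fin n) := univ \ {i, j} with hR
  have hjR : j ∉ R := by simp [hR]
  have hiR : i ∉ insert j R := by simp [hR, hij]
  have huniv : (univ : Finset (Fin n)) = insert i (insert j R) := by
    ext k
    by_cases hki : k = i <;> by_cases hkj : k = j <;> simp [hR, hki, hkj]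
  rw [bernExp]
  rw [show ((Finset.univ : Finset (Fin n)).powerset) = (insert i (insert j R)).powerset by rw [← huniv]]
  simp only [Finset.sum_powerset_insert hiR, Finset.sum_powerset_insert hjR]
  rw [← Finset.sum_add_distrib, ← Finset.sum_add_distrib, ← Finset.sum_add_distrib]
  refine Finset.sum_congr rfl fun S hS => ?_
  rw [Finset.mem_powerset] at hS
  have hiS : i ∉ S := fun h => by have := hS h; simp [hR] at this
  have hjS : j ∉ S := fun h => by have := hS h; simp [hR] at this
  have hijS : i ∉ insert j S := by simp [hij, hiS]
  have hmem : ∀ k, k ∈ S → k ≠ i ∧ k ≠ j := fun k hk => by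
    have := hS hk; simp [hR] at this; tauto
  have c0 : Sᶜ = insert i (insert j (R \ S)) := by
    ext k
    by_cases hki : k = i <;> by_cases hkj : k = j <;>
      simp [hR, hki, hkj, hij, hiS, hjS] <;> tauto
  have c1 : (insert j S)ᶜ = insert i (R \ S) := by
    ext k
    by_cases hki : k = i <;> by_cases hkj : k = j <;>
      simp [hR, hki, hkj, hij, hiS, hjS] <;> tauto
  have c2 : (insert i S)ᶜ = insert j (R \ S) := by
    ext k
    by_cases hki : k = i <;> by_cases hkj : k = j <;>
      simp [hR, hki, hkj, hij, Ne.symm hij, hiS, hjS] <;> tauto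
  have c3 : (insert i (insert j S))ᶜ = R \ S := by
    ext k
    by_cases hki : k = i <;> by_cases hkj : k = j <;>
      simp [hR, hki, hkj, hij, Ne.symm hij, hiS, hjS] <;> tauto
  have hiRS : i ∉ R \ S := by simp [hR]
  have hjRS : j ∉ R \ S := by simp [hR]
  have hjiRS : j ∉ insert i (R \ S) := by simp [hR, Ne.symm hij]
  have hijRS : i ∉ insert j (R \ S) := by simp [hR, hij]
  rw [c0, c1, c2, c3]
  simp only [Finset.prod_insert hijRS, Finset.prod_insert hjRS, Finset.prod_insert hjiRS,
    Finset.prod_insert hiRS, Finset.prod_insert hijS, Finset.prod_insert hjS,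
    Finset.prod_insert hiS, Finset.card_insert_of_notMem hijS,
    Finset.card_insert_of_notMem hjS, Finset.card_insert_of_notMem hiS]
  ring

lemma bernExp_biaffine {n : ℕ} (p : Fin n → ℝ) (g : ℕ → ℝ) (i j : Fin n) (hij : i ≠ j) :
    ∃ A B D : ℝ, ∀ u v : ℝ,
      bernExp (Function.update (Function.update p i u) j v) g
        = A + B * (u + v) + D * (u * v) := by
  set R : Finset (Fin n) := univ \ {i, j} with hR
  set w : Finset (Fin n) → ℝ := fun S => (∏ k ∈ S, p k) * ∏ k ∈ R \ S, (1 - p k) with hw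
  refine ⟨∑ S ∈ R.powerset, w S * g S.card,
    ∑ S ∈ R.powerset, w S * (g (S.card + 1) - g S.card),
    ∑ S ∈ R.powerset, w S * (g S.card - 2 * g (S.card + 1) + g (S.card + 2)), fun u v => ?_⟩
  set p' : Fin n → ℝ := Function.update (Function.update p i u) j v with hp'
  have hpi : p' i = u := by
    rw [hp', Function.update_of_ne hij, Function.update_self]
  have hpj : p' j = v := by rw [hp', Function.update_self]
  have hkR : ∀ k, k ∈ R → p' k = p k := by
    intro k hk
    rw [hR, Finset.mem_sdiff, Finset.mem_insert, Finset.mem_singleton] at hk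
    push_neg at hk
    rw [hp', Function.update_of_ne hk.2.2, Function.update_of_ne hk.2.1]
  rw [bernExp_decomp p' g i j hij, ← hR]
  have key : ∀ S ∈ R.powerset,
      ((∏ k ∈ S, p' k) * ∏ k ∈ R \ S, (1 - p' k)) *
        ((1 - p' i) * (1 - p' j) * g S.card + p' i * (1 - p' j) * g (S.card + 1)
          + p' j * (1 - p' i) * g (S.card + 1) + p' i * p' j * g (S.card + 2))
      = w S * g S.card + w S * (g (S.card + 1) - g S.card) * (u + v)
        + w S * (g S.card - 2 * g (S.card + 1) + g (S.card + 2)) * (u * v) := by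
    intro S hS
    rw [Finset.mem_powerset] at hS
    have h1 : ∏ k ∈ S, p' k = ∏ k ∈ S, p k :=
      Finset.prod_congr rfl fun k hk => hkR k (hS hk)
    have h2 : ∏ k ∈ R \ S, (1 - p' k) = ∏ k ∈ R \ S, (1 - p k) :=
      Finset.prod_congr rfl fun k hk => by rw [hkR k (Finset.mem_sdiff.1 hk).1]
    rw [h1, h2, hpi, hpj, hw]
    ring
  rw [Finset.sum_congr rfl key, Finset.sum_add_distrib, Finset.sum_add_distrib,
    ← Finset.sum_mul, ← Finset.sum_mul]

lemma bernExp_move {n : ℕ} (p : Fin n → ℝ) (g : ℕ → ℝ) (i j : Fin n) (hij : i ≠ j) :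
    ∃ D : ℝ, ∀ t : ℝ,
      bernExp (Function.update (Function.update p i (p i + t)) j (p j - t)) g
        = bernExp p g + D * (t * (p j - p i) - t ^ 2) := by
  obtain ⟨A, B, D, hABD⟩ := bernExp_biaffine p g i j hij
  have hpe : Function.update (Function.update p i (p i)) j (p j) = p := by
    rw [show p j = (Function.update p i (p i)) j from
      (Function.update_of_ne (Ne.symm hij) _ _).symm]
    rw [Function.update_eq_self, Function.update_eq_self]
  have hp0 : bernExp p g = A + B * (p i + p j) + D * (p i * p j) := by
    have h := hABD (p i) (p j); rwa [hpe] at h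
  exact ⟨D, fun t => by rw [hABD, hp0]; ring⟩

lemma bernExp_continuous {n : ℕ} (g : ℕ → ℝ) :
    Continuous fun p : Fin n → ℝ => bernExp p g := by
  unfold bernExp
  refine continuous_finset_sum _ fun S _ => ?_
  exact ((continuous_finset_prod _ fun k _ => continuous_apply k).mul
    (continuous_finset_prod _ fun k _ => continuous_const.sub (continuous_apply k))).mul
    continuous_const

/-- Hoeffding's extremal theorem: for `g : {0,…,n} → ℝ` and `0 ≤ q ≤ n`, among all tuples
`(p_1, …, p_n) ∈ [0,1]^n` with `Σ p_i = q` there is a minimizer of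
`E[g(B_1 + ⋯ + B_n)]` (`B_i` independent Bernoullis with success probabilities `p_i`)
in which every `p_i` lies in `{0, x, 1}` for a common value `x ∈ (0,1)`. -/
theorem hoeffding_extremal (n : ℕ) (g : ℕ → ℝ) (q : ℝ) (hq0 : 0 ≤ q) (hqn : q ≤ n) :
    ∃ p : Fin n → ℝ,
      (∀ i, 0 ≤ p i ∧ p i ≤ 1) ∧ (∑ i, p i = q) ∧
      (∀ p' : Fin n → ℝ, (∀ i, 0 ≤ p' i ∧ p' i ≤ 1) → (∑ i, p' i = q) →
        bernExp p g ≤ bernExp p' g) ∧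
      ∃ x : ℝ, 0 < x ∧ x < 1 ∧ ∀ i, p i = 0 ∨ p i = x ∨ p i = 1 := by
  rcases Nat.eq_zero_or_pos n with hn | hn
  · subst hn
    refine ⟨fun _ => 0, fun i => i.elim0, ?_, ?_, 1/2, by norm_num, by norm_num,
      fun i => i.elim0⟩
    · simpa using (le_antisymm (by exact_mod_cast hqn) hq0).symm
    · intro p' _ _
      have : p' = fun _ => (0 : ℝ) := funext fun i => i.elim0
      rw [this]
  have hn0 : (0 : ℝ) < n := by exact_mod_cast hn
  set K : Set (Fin n → ℝ) := {p | (∀ i, 0 ≤ p i ∧ p i ≤ 1) ∧ ∑ i, p i = q} with hKdef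
  have hsum_cont : Continuous fun p : Fin n → ℝ => ∑ i, p i :=
    continuous_finset_sum _ fun i _ => continuous_apply i
  have hK_comp : IsCompact K := by
    have : K = (Set.univ.pi fun _ : Fin n => Set.Icc (0:ℝ) 1) ∩
        {p : Fin n → ℝ | ∑ i, p i = q} := by
      ext p; simp [hKdef, Set.mem_pi, Set.mem_Icc, Pi.le_def, forall_and]
    rw [this]
    exact (isCompact_univ_pi fun _ => isCompact_Icc).inter_right
      (isClosed_eq hsum_cont continuous_const)
  have hK_ne : K.Nonempty := by
    refine ⟨fun _ => q / n, fun i => ⟨div_nonneg hq0 hn0.le, ?_⟩, ?_⟩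
    · rw [div_le_one hn0]; exact hqn
    · rw [Finset.sum_const, Finset.card_univ, Fintype.card_fin, nsmul_eq_mul]
      field_simp
  obtain ⟨p₀, hp₀K, hp₀min⟩ :=
    hK_comp.exists_isMinOn hK_ne (bernExp_continuous g).continuousOn
  set M : Set (Fin n → ℝ) := K ∩ {p | bernExp p g = bernExp p₀ g} with hMdef
  have hM_comp : IsCompact M :=
    hK_comp.inter_right (isClosed_eq (bernExp_continuous g) continuous_const)
  have hM_ne : M.Nonempty := ⟨p₀, hp₀K, rfl⟩
  have hsq_cont : Continuous fun p : Fin n → ℝ => ∑ i, (p i) ^ 2 :=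
    continuous_finset_sum _ fun i _ => (continuous_apply i).pow 2
  obtain ⟨p, hpM, hpmax⟩ := hM_comp.exists_isMaxOn hM_ne hsq_cont.continuousOn
  have hpK : p ∈ K := hpM.1
  have hmin : ∀ r ∈ K, bernExp p g ≤ bernExp r g := by
    intro r hr
    calc bernExp p g = bernExp p₀ g := hpM.2
    _ ≤ bernExp r g := isMinOn_iff.mp hp₀min r hr
  have hmax : ∀ r ∈ M, ∑ i, (r i) ^ 2 ≤ ∑ i, (p i) ^ 2 := fun r hr =>
    isMaxOn_iff.mp hpmax r hr
  -- auxiliary facts about the "move"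
  have hmoveK : ∀ (i j : Fin n), i ≠ j → ∀ t : ℝ,
      0 ≤ p i + t → p i + t ≤ 1 → 0 ≤ p j - t → p j - t ≤ 1 →
      Function.update (Function.update p i (p i + t)) j (p j - t) ∈ K := by
    intro i j hij t h1 h2 h3 h4
    constructor
    · intro k
      rcases eq_or_ne k j with rfl | hkj
      · simp only [Function.update_self]; exact ⟨h3, h4⟩
      rcases eq_or_ne k i with rfl | hki
      · rw [Function.update_of_ne hkj, Function.update_self]; exact ⟨h1, h2⟩
      · rw [Function.update_of_ne hkj, Function.update_of_ne hki]; exact hpK.1 k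
    · have hiu : i ∈ (univ : Finset (Fin n)) \ {j} := by simp [hij]
      rw [Finset.sum_update_of_mem (Finset.mem_univ j),
        Finset.sum_update_of_mem hiu]
      have hq : ∑ k, p k = q := hpK.2
      have h1 : ∑ k, p k = p j + ∑ k ∈ univ \ {j}, p k := by
        rw [Finset.sum_eq_sum_sdiff_singleton_add (Finset.mem_univ j) p]; ring
      have h2 : ∑ k ∈ univ \ {j}, p k = p i + ∑ k ∈ (univ \ {j}) \ {i}, p k := by
        rw [Finset.sum_eq_sum_sdiff_singleton_add hiu p]; ring
      linarith
  have hmovesq : ∀ (i j : Fin n), i ≠ j → ∀ t : ℝ,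
      ∑ k, (Function.update (Function.update p i (p i + t)) j (p j - t) k) ^ 2
        = (∑ k, (p k) ^ 2) - 2 * (t * (p j - p i) - t ^ 2) := by
    intro i j hij t
    have hiu : i ∈ (univ : Finset (Fin n)) \ {j} := by simp [hij]
    have step : ∀ f : Fin n → ℝ,
        (fun k => (Function.update f i (p i + t) k) ^ 2)
          = Function.update (fun k => (f k) ^ 2) i ((p i + t) ^ 2) := by
      intro f; funext k
      rcases eq_or_ne k i with rfl | hk
      · simp
      · simp [Function.update_of_ne hk]
    have step2 : (fun k => (Function.update (Function.update p i (p i + t)) j (p j - t) k) ^ 2)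
        = Function.update (Function.update (fun k => (p k)^2) i ((p i + t)^2)) j ((p j - t)^2) := by
      funext k
      rcases eq_or_ne k j with rfl | hkj
      · simp
      rcases eq_or_ne k i with rfl | hki
      · simp [Function.update_of_ne hkj]
      · simp [Function.update_of_ne hkj, Function.update_of_ne hki]
    rw [show ∑ k, (Function.update (Function.update p i (p i + t)) j (p j - t) k) ^ 2
        = ∑ k, Function.update (Function.update (fun k => (p k)^2) i ((p i + t)^2)) j
          ((p j - t)^2) k from by rw [← step2]]
    rw [Finset.sum_update_of_mem (Finset.mem_univ j), Finset.sum_update_of_mem hiu]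
    have h1 : ∑ k, (p k) ^ 2 = (p j) ^ 2 + ∑ k ∈ univ \ {j}, (p k) ^ 2 := by
      rw [Finset.sum_eq_sum_sdiff_singleton_add (Finset.mem_univ j) (fun k => (p k)^2)]; ring
    have h2 : ∑ k ∈ univ \ {j}, (p k) ^ 2
        = (p i) ^ 2 + ∑ k ∈ (univ \ {j}) \ {i}, (p k) ^ 2 := by
      rw [Finset.sum_eq_sum_sdiff_singleton_add hiu (fun k => (p k)^2)]; ring
    linarith [sq_nonneg t]
  have pair : ∀ i j : Fin n, i ≠ j → 0 < p i → p i < 1 → 0 < p j → p j < 1 →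
      p i = p j := by
    intro i j hij h0i h1i h0j h1j
    obtain ⟨D, hD⟩ := bernExp_move p g i j hij
    by_contra hne
    set m : ℝ := min (min (p i) (1 - p i)) (min (p j) (1 - p j)) with hm
    have hm0 : 0 < m := by
      apply lt_min (lt_min h0i (by linarith)) (lt_min h0j (by linarith))
    have hmi : m ≤ p i := le_trans (min_le_left _ _) (min_le_left _ _)
    have hmi' : m ≤ 1 - p i := le_trans (min_le_left _ _) (min_le_right _ _)
    have hmj : m ≤ p j := le_trans (min_le_right _ _) (min_le_left _ _)
    have hmj' : m ≤ 1 - p j := le_trans (min_le_right _ _) (min_le_right _ _)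
    set ε : ℝ := m / 2 with hε
    have hε0 : 0 < ε := by positivity
    set t : ℝ := if p j ≤ p i then ε else -ε with ht
    have htabs : t = ε ∨ t = -ε := by
      rw [ht]; split_ifs <;> tauto
    have hΔ : t * (p j - p i) - t ^ 2 < 0 := by
      have h1 : t * (p j - p i) ≤ 0 := by
        rw [ht]; split_ifs with h
        · exact mul_nonpos_of_nonneg_of_nonpos hε0.le (by linarith)
        · push_neg at h
          exact mul_nonpos_of_nonpos_of_nonneg (by linarith) (by linarith)
      have h2 : 0 < t ^ 2 := by
        rcases htabs with h | h <;> rw [h] <;> nlinarith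
      linarith
    have hf1 : 0 ≤ p i + t := by rcases htabs with h | h <;> rw [h] <;> linarith
    have hf2 : p i + t ≤ 1 := by rcases htabs with h | h <;> rw [h] <;> linarith
    have hf3 : 0 ≤ p j - t := by rcases htabs with h | h <;> rw [h] <;> linarith
    have hf4 : p j - t ≤ 1 := by rcases htabs with h | h <;> rw [h] <;> linarith
    rcases lt_trichotomy D 0 with hDlt | hDeq | hDgt
    · -- D < 0 : move to the midpoint strictly decreases bernExp
      set s : ℝ := (p j - p i) / 2 with hs
      have hs0 : s ≠ 0 := by
        simp only [hs, div_ne_zero_iff, sub_ne_zero]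
        exact ⟨Ne.symm hne, by norm_num⟩
      have hle := hmin _ (hmoveK i j hij s (by rw [hs]; linarith) (by rw [hs]; linarith)
        (by rw [hs]; linarith) (by rw [hs]; linarith))
      rw [hD s] at hle
      have h2s : p j - p i = 2 * s := by rw [hs]; ring
      have hsq : s * (p j - p i) - s ^ 2 = s ^ 2 := by rw [h2s]; ring
      rw [hsq] at hle
      have hs2 : 0 < s ^ 2 := by positivity
      nlinarith
    · -- D = 0 : ε-move keeps bernExp, strictly increases the sum of squares
      have hKm := hmoveK i j hij t hf1 hf2 hf3 hf4
      have hMm : Function.update (Function.update p i (p i + t)) j (p j - t) ∈ M := by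
        refine ⟨hKm, ?_⟩
        show bernExp _ g = bernExp p₀ g
        rw [hD t, hDeq, zero_mul, add_zero]
        exact hpM.2
      have hle := hmax _ hMm
      rw [hmovesq i j hij t] at hle
      linarith
    · -- D > 0 : ε-move strictly decreases bernExp
      have hle := hmin _ (hmoveK i j hij t hf1 hf2 hf3 hf4)
      rw [hD t] at hle
      nlinarith
  refine ⟨p, hpK.1, hpK.2, fun p' h1 h2 => hmin p' ⟨h1, h2⟩, ?_⟩
  by_cases hx : ∃ i, 0 < p i ∧ p i < 1
  · obtain ⟨i0, hi0, hi1⟩ := hx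
    refine ⟨p i0, hi0, hi1, fun k => ?_⟩
    rcases eq_or_lt_of_le (hpK.1 k).1 with h0 | h0
    · exact Or.inl h0.symm
    rcases eq_or_lt_of_le (hpK.1 k).2 with h1 | h1
    · exact Or.inr (Or.inr h1)
    rcases eq_or_ne k i0 with rfl | hki
    · exact Or.inr (Or.inl rfl)
    · exact Or.inr (Or.inl (pair k i0 hki h0 h1 hi0 hi1))
  · push_neg at hx
    refine ⟨1/2, by norm_num, by norm_num, fun k => ?_⟩
    rcases eq_or_lt_of_le (hpK.1 k).1 with h0 | h0
    · exact Or.inl h0.symm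
    · exact Or.inr (Or.inr (le_antisymm (hpK.1 k).2 (hx k h0)))
end

section
/- Let x be a feasible solution of the subtour elimination LP on a graph G = (V,E) (i.e., x(δ(v)) = 2 for all vertices v, x(δ(S)) ≥ 2 for all proper nonempty S ⊊ V, x ≥ 0), and let S ⊆ V be a tight set, meaning x(δ(S)) = 2. Then the restriction of x to the edges with both endpoints in S satisfies x(E(S)) = |S| - 1, and for every S' ⊆ S, x(E(S')) ≤ |S'| - 1; hence the restriction lies in the spanning tree polytope of the graph (S, E(S)). -/
open Finset

/-- The set `δ(S)` of edges of a multigraph (edges `E` with endpoint map `ends`) having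
exactly one endpoint in `S`. -/
def cutEdges {V E : Type*} [Fintype E] [DecidableEq V] [DecidableEq E]
    (ends : E → V × V) (S : Finset V) : Finset E :=
  Finset.univ.filter (fun e =>
    ((ends e).1 ∈ S ∧ (ends e).2 ∉ S) ∨ ((ends e).1 ∉ S ∧ (ends e).2 ∈ S))

/-- The set `E(S)` of edges with both endpoints in `S`. -/
def inEdges {V E : Type*} [Fintype E] [DecidableEq V] [DecidableEq E]
    (ends : E → V × V) (S : Finset V) : Finset E :=
  Finset.univ.filter (fun e => (ends e).1 ∈ S ∧ (ends e).2 ∈ S)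

/-- Handshake-type identity: summing the cut values of singletons over `T` counts each
edge inside `T` twice and each edge of `δ(T)` once. -/
lemma handshake {V E : Type*} [Fintype E] [DecidableEq V] [DecidableEq E]
    (ends : E → V × V) (hloop : ∀ e, (ends e).1 ≠ (ends e).2) (x : E → ℝ)
    (T : Finset V) :
    ∑ v ∈ T, ∑ e ∈ cutEdges ends {v}, x e =
      2 * ∑ e ∈ inEdges ends T, x e + ∑ e ∈ cutEdges ends T, x e := by
  have h1 : ∀ v : V, ∑ e ∈ cutEdges ends {v}, x e =
      ∑ e : E, ((if (ends e).1 = v then x e else 0) + (if (ends e).2 = v then x e else 0)) := by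
    intro v
    rw [cutEdges, Finset.sum_filter]
    refine Finset.sum_congr rfl fun e _ => ?_
    have h := hloop e
    by_cases h1 : (ends e).1 = v <;> by_cases h2 : (ends e).2 = v <;>
      simp_all
  calc ∑ v ∈ T, ∑ e ∈ cutEdges ends {v}, x e
      = ∑ v ∈ T, ∑ e : E, ((if (ends e).1 = v then x e else 0) +
          (if (ends e).2 = v then x e else 0)) := by
        exact Finset.sum_congr rfl fun v _ => h1 v
    _ = ∑ e : E, ∑ v ∈ T, ((if (ends e).1 = v then x e else 0) +
          (if (ends e).2 = v then x e else 0)) := Finset.sum_comm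
    _ = 2 * ∑ e ∈ inEdges ends T, x e + ∑ e ∈ cutEdges ends T, x e := by
        rw [inEdges, cutEdges, Finset.mul_sum, Finset.sum_filter, Finset.sum_filter,
          ← Finset.sum_add_distrib]
        refine Finset.sum_congr rfl fun e _ => ?_
        rw [Finset.sum_add_distrib, Finset.sum_ite_eq, Finset.sum_ite_eq]
        by_cases ha : (ends e).1 ∈ T <;> by_cases hb : (ends e).2 ∈ T <;>
          simp [ha, hb] <;> ring

/-- Let `x` be a feasible solution of the subtour elimination LP on a (multi)graph
`G = (V, E)` (degree constraints `x(δ(v)) = 2`, cut constraints `x(δ(S)) ≥ 2` for proper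
nonempty `S`, and `x ≥ 0`) and let `S` be a tight set, i.e. `x(δ(S)) = 2`.  Then the
restriction of `x` to `E(S)` satisfies `x(E(S)) = |S| - 1` and `x(E(S')) ≤ |S'| - 1`
for every nonempty `S' ⊆ S`; hence it lies in the spanning tree polytope of
`(S, E(S))`. -/
theorem tight_set_spanning_tree_polytope {V E : Type*}
    [Fintype V] [Fintype E] [DecidableEq V] [DecidableEq E]
    (ends : E → V × V) (hloop : ∀ e, (ends e).1 ≠ (ends e).2)
    (x : E → ℝ) (hx0 : ∀ e, 0 ≤ x e)
    (hdeg : ∀ v : V, ∑ e ∈ cutEdges ends {v}, x e = 2)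
    (hcut : ∀ S : Finset V, S.Nonempty → S ≠ Finset.univ →
      2 ≤ ∑ e ∈ cutEdges ends S, x e)
    (S : Finset V) (hS : S.Nonempty) (hSproper : S ≠ Finset.univ)
    (htight : ∑ e ∈ cutEdges ends S, x e = 2) :
    (∑ e ∈ inEdges ends S, x e = (S.card : ℝ) - 1) ∧
    ∀ S' ⊆ S, S'.Nonempty → ∑ e ∈ inEdges ends S', x e ≤ (S'.card : ℝ) - 1 := by
  have key : ∀ T : Finset V,
      2 * ∑ e ∈ inEdges ends T, x e + ∑ e ∈ cutEdges ends T, x e = 2 * T.card := by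
    intro T
    rw [← handshake ends hloop x T]
    rw [Finset.sum_congr rfl fun v _ => hdeg v]
    simp [mul_comm]
  constructor
  · have := key S
    rw [htight] at this
    linarith
  · intro S' hsub hne
    have hne' : S' ≠ Finset.univ := by
      rintro rfl
      exact hSproper (Finset.univ_subset_iff.mp hsub)
    have := key S'
    have := hcut S' hne hne'
    linarith
end

section
/- In a 4-regular 4-edge-connected multigraph G, let S be a set with |δ(S)| = 4 such that the induced graph on S (with the complement contracted) has no proper minimum cut, i.e., S is a 'degree cut'. If u, v, w are three vertices of the contracted graph G_S inside S, each incident to exactly one edge of δ(S), and u, v, w pairwise adjacent (forming a triangle), then G_S is the complete graph K_5. -/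
open Finset

/-- The set of edges joining the two vertices `a` and `b`. -/
def btwEdges {V E : Type*} [Fintype E] [DecidableEq V] [DecidableEq E]
    (ends : E → V × V) (a b : V) : Finset E :=
  Finset.univ.filter (fun e => ends e = (a, b) ∨ ends e = (b, a))

section aux
set_option linter.unusedSectionVars false
variable {V E : Type*} [Fintype V] [Fintype E] [DecidableEq V] [DecidableEq E]

lemma btwEdges_comm (ends : E → V × V) (a b : V) :
    btwEdges ends a b = btwEdges ends b a := by
  unfold btwEdges; ext e; simp only [mem_filter, mem_univ, true_and]; tauto

lemma cut_card (ends : E → V × V) (Q : Finset V) :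
    (cutEdges ends Q).card = ∑ p ∈ Q ×ˢ Qᶜ, (btwEdges ends p.1 p.2).card := by
  have hmem : ∀ e ∈ cutEdges ends Q,
      (if (ends e).1 ∈ Q then ends e else ((ends e).2, (ends e).1)) ∈ Q ×ˢ Qᶜ := by
    intro e he
    simp only [cutEdges, mem_filter, mem_univ, true_and] at he
    rcases he with ⟨h1, h2⟩ | ⟨h1, h2⟩
    · simp [h1, h2, mem_product]
    · simp [h1, h2, mem_product]
  rw [Finset.card_eq_sum_card_fiberwise hmem]
  refine sum_congr rfl fun p hp => ?_
  obtain ⟨a, b⟩ := p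
  rw [mem_product] at hp
  obtain ⟨ha, hb⟩ := hp
  rw [mem_compl] at hb
  congr 1
  ext e
  simp only [cutEdges, btwEdges, mem_filter, mem_univ, true_and]
  constructor
  · rintro ⟨hcut, hf⟩
    split_ifs at hf with h
    · exact Or.inl hf
    · right
      rw [Prod.ext_iff] at hf ⊢
      simp only at hf ⊢
      tauto
  · rintro (h | h) <;> simp [h, ha, hb]

lemma deg_eq (ends : E → V × V) (a : V) :
    (cutEdges ends ({a} : Finset V)).card
      = ∑ b ∈ ({a} : Finset V)ᶜ, (btwEdges ends a b).card := by
  rw [cut_card, Finset.singleton_product, Finset.sum_map]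
  rfl

lemma compl_singleton_split (u v t w : V) (Q : Finset V)
    (hmem : ∀ a, a ∈ Q ↔ a = u ∨ a = v ∨ a = t ∨ a = w)
    (h1 : u ≠ v) (h2 : u ≠ t) (h3 : u ≠ w) :
    ({u} : Finset V)ᶜ = insert v (insert t (insert w Qᶜ)) := by
  ext a
  simp only [mem_compl, mem_singleton, mem_insert, hmem]
  constructor
  · intro h
    by_cases hv : a = v
    · tauto
    by_cases ht : a = t
    · tauto
    by_cases hw : a = w
    · tauto
    tauto
  · rintro (rfl | rfl | rfl | h)
    · exact h1.symm
    · exact h2.symm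
    · exact h3.symm
    · tauto

end aux

set_option maxHeartbeats 1600000 in
set_option linter.unusedVariables false in
/-- Let `G_S` be the 4-regular loopless multigraph obtained by contracting the complement
of a degree cut `S` to a single vertex `w`, so that there is no proper minimum cut inside
`S`: every `R` with `w ∉ R`, `2 ≤ |R|` and `R ≠ S` has `|δ(R)| ≥ 6`.  If `u`, `v`, `t`
are three vertices of `G_S` inside `S`, each incident to exactly one edge of `δ(S)` (one
edge to `w`), and pairwise adjacent (forming a triangle), then `G_S` is the complete
graph `K_5`: it has `5` vertices and exactly one edge between every pair of distinct
vertices. -/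
theorem degree_cut_triangle_K5 {V E : Type*}
    [Fintype V] [Fintype E] [DecidableEq V] [DecidableEq E]
    (ends : E → V × V) (hloop : ∀ e, (ends e).1 ≠ (ends e).2)
    (w : V)
    (hreg : ∀ v : V, (cutEdges ends ({v} : Finset V)).card = 4)
    (hnomin : ∀ R : Finset V, w ∉ R → 2 ≤ R.card → R ≠ Finset.univ.erase w →
      6 ≤ (cutEdges ends R).card)
    (u v t : V)
    (hu : u ≠ w) (hv : v ≠ w) (ht : t ≠ w)
    (huv : u ≠ v) (hvt : v ≠ t) (hut : u ≠ t)
    (huw : (btwEdges ends u w).card = 1)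
    (hvw : (btwEdges ends v w).card = 1)
    (htw : (btwEdges ends t w).card = 1)
    (huvadj : 1 ≤ (btwEdges ends u v).card)
    (hvtadj : 1 ≤ (btwEdges ends v t).card)
    (hutadj : 1 ≤ (btwEdges ends u t).card) :
    Fintype.card V = 5 ∧ ∀ a b : V, a ≠ b → (btwEdges ends a b).card = 1 := by
  classical
  set Q : Finset V := {u, v, t, w} with hQ
  have hmemQ : ∀ a, a ∈ Q ↔ a = u ∨ a = v ∨ a = t ∨ a = w := by
    intro a; simp [hQ]
  have huQ : u ∈ Q := by rw [hmemQ]; tauto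
  have hvQ : v ∈ Q := by rw [hmemQ]; tauto
  have htQ : t ∈ Q := by rw [hmemQ]; tauto
  have hwQ : w ∈ Q := by rw [hmemQ]; tauto
  -- complement splittings
  have hcw : ({w} : Finset V)ᶜ = insert u (insert v (insert t Qᶜ)) :=
    compl_singleton_split w u v t Q (fun a => by rw [hmemQ]; tauto)
      hu.symm hv.symm ht.symm
  have hcu : ({u} : Finset V)ᶜ = insert v (insert t (insert w Qᶜ)) :=
    compl_singleton_split u v t w Q hmemQ huv hut hu
  have hcv : ({v} : Finset V)ᶜ = insert u (insert t (insert w Qᶜ)) :=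
    compl_singleton_split v u t w Q (fun a => by rw [hmemQ]; tauto) huv.symm hvt hv
  have hct : ({t} : Finset V)ᶜ = insert u (insert v (insert w Qᶜ)) :=
    compl_singleton_split t u v w Q (fun a => by rw [hmemQ]; tauto) hut.symm hvt.symm ht
  -- nonmembership facts for sum_insert
  have nwQ : w ∉ (Qᶜ : Finset V) := by simp [huQ, hvQ, htQ, hwQ]
  have nuQ : u ∉ (Qᶜ : Finset V) := by simp [huQ]
  have nvQ : v ∉ (Qᶜ : Finset V) := by simp [hvQ]
  have ntQ : t ∉ (Qᶜ : Finset V) := by simp [htQ]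
  -- degree equations
  have hw4 : (btwEdges ends w u).card + ((btwEdges ends w v).card +
      ((btwEdges ends w t).card + ∑ a ∈ Qᶜ, (btwEdges ends w a).card)) = 4 := by
    have h := hreg w
    rw [deg_eq, hcw,
      sum_insert (by simp [huv, hut, nuQ] : u ∉ insert v (insert t (Qᶜ : Finset V))),
      sum_insert (by simp [hvt, nvQ] : v ∉ insert t (Qᶜ : Finset V)),
      sum_insert ntQ] at h
    exact h
  have hu4 : (btwEdges ends u v).card + ((btwEdges ends u t).card +
      ((btwEdges ends u w).card + ∑ a ∈ Qᶜ, (btwEdges ends u a).card)) = 4 := by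
    have h := hreg u
    rw [deg_eq, hcu,
      sum_insert (by simp [hvt, hv, nvQ] : v ∉ insert t (insert w (Qᶜ : Finset V))),
      sum_insert (by simp [ht, ntQ] : t ∉ insert w (Qᶜ : Finset V)),
      sum_insert nwQ] at h
    exact h
  have hv4 : (btwEdges ends v u).card + ((btwEdges ends v t).card +
      ((btwEdges ends v w).card + ∑ a ∈ Qᶜ, (btwEdges ends v a).card)) = 4 := by
    have h := hreg v
    rw [deg_eq, hcv,
      sum_insert (by simp [hut, hu, nuQ] : u ∉ insert t (insert w (Qᶜ : Finset V))),
      sum_insert (by simp [ht, ntQ] : t ∉ insert w (Qᶜ : Finset V)),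
      sum_insert nwQ] at h
    exact h
  have ht4 : (btwEdges ends t u).card + ((btwEdges ends t v).card +
      ((btwEdges ends t w).card + ∑ a ∈ Qᶜ, (btwEdges ends t a).card)) = 4 := by
    have h := hreg t
    rw [deg_eq, hct,
      sum_insert (by simp [huv, hu, nuQ] : u ∉ insert v (insert w (Qᶜ : Finset V))),
      sum_insert (by simp [hv, nvQ] : v ∉ insert w (Qᶜ : Finset V)),
      sum_insert nwQ] at h
    exact h
  rw [btwEdges_comm ends w u, huw, btwEdges_comm ends w v, hvw,
      btwEdges_comm ends w t, htw] at hw4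
  have hSw : ∑ a ∈ Qᶜ, (btwEdges ends w a).card = 1 := by omega
  rw [huw] at hu4
  rw [btwEdges_comm ends v u, hvw] at hv4
  rw [btwEdges_comm ends t u, btwEdges_comm ends t v, htw] at ht4
  have hSu : ∑ a ∈ Qᶜ, (btwEdges ends u a).card ≤ 1 := by omega
  have hSv : ∑ a ∈ Qᶜ, (btwEdges ends v a).card ≤ 1 := by omega
  have hSt : ∑ a ∈ Qᶜ, (btwEdges ends t a).card ≤ 1 := by omega
  -- the cut of R = Qᶜ has at most 4 edges
  have hcut : (cutEdges ends (Qᶜ : Finset V)).card ≤ 4 := by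
    rw [cut_card, compl_compl, Finset.sum_product, Finset.sum_comm]
    have expand : ∑ b ∈ Q, ∑ a ∈ (Qᶜ : Finset V), (btwEdges ends a b).card
        = (∑ a ∈ Qᶜ, (btwEdges ends u a).card) + ((∑ a ∈ Qᶜ, (btwEdges ends v a).card)
          + ((∑ a ∈ Qᶜ, (btwEdges ends t a).card)
            + (∑ a ∈ Qᶜ, (btwEdges ends w a).card))) := by
      rw [hQ]
      rw [sum_insert (by simp [huv, hut, hu] : u ∉ ({v, t, w} : Finset V)),
        sum_insert (by simp [hvt, hv] : v ∉ ({t, w} : Finset V)),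
        sum_insert (by simp [ht] : t ∉ ({w} : Finset V)), sum_singleton]
      congr 1
      · exact sum_congr rfl fun a _ => by rw [btwEdges_comm]
      congr 1
      · exact sum_congr rfl fun a _ => by rw [btwEdges_comm]
      congr 1
      · exact sum_congr rfl fun a _ => by rw [btwEdges_comm]
      · exact sum_congr rfl fun a _ => by rw [btwEdges_comm]
    rw [expand]
    omega
  -- hence |Qᶜ| ≤ 1
  have hRcard : (Qᶜ : Finset V).card ≤ 1 := by
    by_contra hc
    push_neg at hc
    have hne : (Qᶜ : Finset V) ≠ Finset.univ.erase w := by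
      intro h
      have : u ∈ (Qᶜ : Finset V) := by rw [h, mem_erase]; exact ⟨hu, mem_univ u⟩
      exact nuQ this
    have := hnomin (Qᶜ : Finset V) nwQ (by omega) hne
    omega
  -- Qᶜ is nonempty since w sends an edge into it
  have hRne : (Qᶜ : Finset V) ≠ ∅ := by
    intro h
    rw [h, sum_empty] at hSw
    omega
  have hR1 : (Qᶜ : Finset V).card = 1 := by
    have := Finset.one_le_card.mpr (nonempty_of_ne_empty hRne)
    omega
  obtain ⟨x, hx⟩ := Finset.card_eq_one.mp hR1
  have hxQ : x ∉ Q := by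
    have : x ∈ (Qᶜ : Finset V) := hx ▸ mem_singleton_self x
    simpa using this
  have hxu : x ≠ u := fun h => hxQ (h ▸ huQ)
  have hxv : x ≠ v := fun h => hxQ (h ▸ hvQ)
  have hxt : x ≠ t := fun h => hxQ (h ▸ htQ)
  have hxw : x ≠ w := fun h => hxQ (h ▸ hwQ)
  -- card V = 5
  have hQcard : Q.card = 4 := by
    rw [hQ, card_insert_of_notMem (by simp [huv, hut, hu]),
      card_insert_of_notMem (by simp [hvt, hv]),
      card_insert_of_notMem (by simp [ht]), card_singleton]
  have hcardV : Fintype.card V = 5 := by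
    have := Finset.card_add_card_compl Q
    rw [hQcard, hx, card_singleton] at this
    omega
  refine ⟨hcardV, ?_⟩
  -- edge multiplicity equations, with Qᶜ = {x}
  rw [hx, sum_singleton] at hSw hu4 hv4 ht4
  -- degree of x
  have hx4 : (btwEdges ends u x).card + ((btwEdges ends v x).card +
      ((btwEdges ends t x).card + (btwEdges ends w x).card)) = 4 := by
    have hcx : ({x} : Finset V)ᶜ = Q := by rw [← hx, compl_compl]
    have := hreg x
    rw [deg_eq, hcx, hQ, sum_insert (by simp [huv, hut, hu] : u ∉ ({v, t, w} : Finset V)),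
      sum_insert (by simp [hvt, hv] : v ∉ ({t, w} : Finset V)),
      sum_insert (by simp [ht] : t ∉ ({w} : Finset V)), sum_singleton] at this
    rw [btwEdges_comm ends x u, btwEdges_comm ends x v, btwEdges_comm ends x t,
      btwEdges_comm ends x w] at this
    exact this
  have Huv : (btwEdges ends u v).card = 1 := by omega
  have Hvt : (btwEdges ends v t).card = 1 := by omega
  have Hut : (btwEdges ends u t).card = 1 := by omega
  have Hux : (btwEdges ends u x).card = 1 := by omega
  have Hvx : (btwEdges ends v x).card = 1 := by omega
  have Htx : (btwEdges ends t x).card = 1 := by omega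
  have Hwx : (btwEdges ends w x).card = 1 := by omega
  have hall : ∀ a : V, a = u ∨ a = v ∨ a = t ∨ a = w ∨ a = x := by
    intro a
    by_cases h : a ∈ Q
    · rw [hmemQ] at h; tauto
    · have : a ∈ (Qᶜ : Finset V) := by simpa using h
      rw [hx, mem_singleton] at this; tauto
  intro a b hab
  rcases hall a with rfl | rfl | rfl | rfl | rfl <;>
    rcases hall b with rfl | rfl | rfl | rfl | rfl <;>
      first
        | exact absurd rfl hab
        | assumption
        | (rw [btwEdges_comm]; assumption)
end

section
/- With G, M, r, z as above and M sampled from a convex combination representing ν = ((n-1)/(2n))·(1/2)·𝟙 in the matching polytope (so each edge e is in M with probability (n-1)/(4n) and each vertex is saturated with probability 1 - 1/n, with the unsaturated vertex uniform), for every edge e ∈ E one has E[z_e] = 1/2. -/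
open Finset

/-- Let `G` be a (loopless) graph on `n` vertices and let `M` be a random near-perfect
matching (sampled from a convex combination representing `ν = ((n-1)/(2n))·(1/2)·𝟙` in
the matching polytope) with random unsaturated root `root`, so that each edge lies in
`M` with probability `(n-1)/(4n)` and each vertex is the root with probability `1/n`
(hence is saturated with probability `1 - 1/n`).  With
`z_e = 1/2 + (2/3)·1[e ∈ M] − (1/12)·(1[u saturated] + 1[v saturated])` for `e = uv`
(a vertex is saturated iff it is not the root), we have `E[z_e] = 1/2` for every edge. -/
theorem expected_perturbed_marginal {V E Ω : Type*}
    [Fintype V] [Fintype E] [Fintype Ω] [DecidableEq V] [DecidableEq E]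
    (ends : E → V × V) (hloop : ∀ e, (ends e).1 ≠ (ends e).2)
    (p : Ω → ℝ) (hp0 : ∀ ω, 0 ≤ p ω) (hp1 : ∑ ω, p ω = 1)
    (M : Ω → Finset E) (root : Ω → V)
    (hsat : ∀ ω (v : V),
      (∃ e ∈ M ω, (ends e).1 = v ∨ (ends e).2 = v) ↔ v ≠ root ω)
    (hedge : ∀ e : E,
      ∑ ω ∈ Finset.univ.filter (fun ω => e ∈ M ω), p ω =
        ((Fintype.card V : ℝ) - 1) / (4 * (Fintype.card V : ℝ)))
    (hroot : ∀ v : V,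
      ∑ ω ∈ Finset.univ.filter (fun ω => root ω = v), p ω =
        1 / (Fintype.card V : ℝ))
    (z : Ω → E → ℝ)
    (hz : ∀ ω e, z ω e =
      1/2 + (2/3) * (if e ∈ M ω then 1 else 0)
        - (1/12) * ((if (ends e).1 ≠ root ω then 1 else 0)
            + (if (ends e).2 ≠ root ω then 1 else 0))) :
    ∀ e : E, ∑ ω, p ω * z ω e = 1/2 := by
  intro e
  -- Ω is nonempty, hence V is nonempty
  have hΩ : Nonempty Ω := by
    rcases isEmpty_or_nonempty Ω with h | h
    · rw [Finset.univ_eq_empty, Finset.sum_empty] at hp1; norm_num at hp1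
    · exact h
  have hV : Nonempty V := ⟨root (Classical.arbitrary Ω)⟩
  have hn : (Fintype.card V : ℝ) ≠ 0 := by
    have := Fintype.card_pos (α := V)
    positivity
  have ind : ∀ (ω : Ω) (w : V),
      (if w ≠ root ω then (1 : ℝ) else 0) = 1 - (if root ω = w then 1 else 0) := by
    intro ω w
    by_cases h : root ω = w
    · simp [h]
    · rw [if_pos (fun hw => h hw.symm), if_neg h]; ring
  have expand : ∀ ω, p ω * z ω e =
      (1/2) * p ω + (2/3) * (p ω * (if e ∈ M ω then (1:ℝ) else 0))
        - (1/12) * ((p ω - p ω * (if root ω = (ends e).1 then 1 else 0))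
            + (p ω - p ω * (if root ω = (ends e).2 then 1 else 0))) := by
    intro ω
    rw [hz, ind, ind]; ring
  have key : ∀ (q : Ω → Prop) [DecidablePred q],
      ∑ ω, p ω * (if q ω then (1:ℝ) else 0) = ∑ ω ∈ Finset.univ.filter q, p ω := by
    intro q _
    rw [Finset.sum_filter]
    exact Finset.sum_congr rfl fun ω _ => by split <;> simp
  calc ∑ ω, p ω * z ω e
      = ∑ ω, ((1/2) * p ω + (2/3) * (p ω * (if e ∈ M ω then (1:ℝ) else 0))
        - (1/12) * ((p ω - p ω * (if root ω = (ends e).1 then 1 else 0))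
            + (p ω - p ω * (if root ω = (ends e).2 then 1 else 0)))) :=
        Finset.sum_congr rfl fun ω _ => expand ω
    _ = (1/2) * (∑ ω, p ω) + (2/3) * (∑ ω, p ω * (if e ∈ M ω then (1:ℝ) else 0))
        - (1/12) * (((∑ ω, p ω) - ∑ ω, p ω * (if root ω = (ends e).1 then (1:ℝ) else 0))
            + ((∑ ω, p ω) - ∑ ω, p ω * (if root ω = (ends e).2 then (1:ℝ) else 0))) := by
        simp only [Finset.sum_add_distrib, Finset.sum_sub_distrib, ← Finset.mul_sum, mul_ite,
          mul_one, mul_zero]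
        congr 2
        rw [Finset.mul_sum]
        exact Finset.sum_congr rfl fun ω _ => by split <;> ring
    _ = 1/2 := by
        rw [key, key, key, hp1, hedge e, hroot, hroot]
        field_simp
        ring
end

section
/- Suppose for every vertex u we have E[y(δ(u))] ≤ c and y is always a feasible point of the O-join polyhedron. If x is an optimal solution of the subtour LP with optimal dual solution z (so c_e = Σ_{S : e ∈ δ(S)} z_S for every edge e in the support of x by complementary slackness, and 2·Σ_S z_S = c(x) by strong duality), and E[y(δ(S))] ≤ γ for every dual-tight cut S with z_S > 0, then E[c(y)] ≤ (γ/2)·c(x). -/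
open Finset

/-- Dual charging bound.  Let `x` be an optimal solution of the subtour LP with optimal
dual solution `z` supported on a family of cuts (`cut S` is the edge set `δ(S)`): by
complementary slackness `c_e = Σ_{S : e ∈ δ(S)} z_S` for every edge `e` in the support of
`x`, and by strong duality `2·Σ_S z_S = c(x)`.  Let `y` be a random nonnegative `O`-join
solution supported on the support of `x` (outcomes `ω` with probabilities `p ω`).  If
`E[y(δ(S))] ≤ γ` for every dual-tight cut `S` with `z_S > 0`, then
`E[c(y)] ≤ (γ/2)·c(x)`. -/
theorem dual_charging_expected_cost {E C Ω : Type*}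
    [Fintype E] [Fintype C] [Fintype Ω] [DecidableEq E]
    (cut : C → Finset E) (c x : E → ℝ)
    (z : C → ℝ) (hz : ∀ S, 0 ≤ z S)
    (p : Ω → ℝ) (hp0 : ∀ ω, 0 ≤ p ω) (hp1 : ∑ ω, p ω = 1)
    (y : Ω → E → ℝ) (hy0 : ∀ ω e, 0 ≤ y ω e)
    (hsupp : ∀ ω e, x e = 0 → y ω e = 0)
    (γ : ℝ)
    (hcs : ∀ e, x e ≠ 0 →
      c e = ∑ S ∈ Finset.univ.filter (fun S => e ∈ cut S), z S)
    (hsd : 2 * ∑ S, z S = ∑ e, c e * x e)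
    (hγ : ∀ S, 0 < z S → ∑ ω, p ω * (∑ e ∈ cut S, y ω e) ≤ γ) :
    ∑ ω, p ω * (∑ e, c e * y ω e) ≤ (γ / 2) * ∑ e, c e * x e := by
  have key : ∀ ω, ∑ e, c e * y ω e = ∑ S, z S * ∑ e ∈ cut S, y ω e := by
    intro ω
    have h1 : ∑ e, c e * y ω e
        = ∑ e, ∑ S, (if e ∈ cut S then z S * y ω e else 0) := by
      refine Finset.sum_congr rfl fun e _ => ?_
      by_cases h : x e = 0
      · simp [hsupp ω e h]
      · rw [hcs e h]
        simp [Finset.sum_filter, Finset.sum_mul, ite_mul]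
    rw [h1, Finset.sum_comm]
    refine Finset.sum_congr rfl fun S _ => ?_
    rw [Finset.mul_sum]
    rw [← Finset.sum_filter]
    refine Finset.sum_congr ?_ fun e _ => rfl
    simp [Finset.filter_mem_eq_inter]
  have h2 : ∑ ω, p ω * (∑ e, c e * y ω e)
      = ∑ S, z S * ∑ ω, p ω * (∑ e ∈ cut S, y ω e) := by
    simp only [key, Finset.mul_sum]
    rw [Finset.sum_comm]
    refine Finset.sum_congr rfl fun S _ => ?_
    refine Finset.sum_congr rfl fun ω _ => Finset.sum_congr rfl fun i _ => by ring
  rw [h2]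
  have h3 : ∑ S, z S * ∑ ω, p ω * (∑ e ∈ cut S, y ω e) ≤ ∑ S, z S * γ := by
    refine Finset.sum_le_sum fun S _ => ?_
    rcases (hz S).lt_or_eq with h | h
    · exact mul_le_mul_of_nonneg_left (hγ S h) (hz S)
    · simp [← h]
  refine h3.trans ?_
  rw [← Finset.sum_mul]
  have h4 : (∑ S, z S) = (∑ e, c e * x e) / 2 := by linarith
  rw [h4]; exact le_of_eq (by ring)
end

section
/- Let μ be a strongly Rayleigh distribution over subsets of a ground set partitioned into A ∪ B with |A| = |B| = 2, such that the number of elements sampled from A is always at most 2 and from B at most 2, and E[|A ∩ T|] = E[|B ∩ T|] = 1. Then P[|A ∩ T| = 1 and |B ∩ T| = 1] ≥ 1/4. -/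
open Finset Complex Filter Topology



noncomputable def csqrt (z : ℂ) : ℂ :=
  (z + (‖z‖ : ℝ)) / ((Real.sqrt (2 * (z.re + ‖z‖)) : ℝ) : ℂ)

lemma csqrt_sq {z : ℂ} (h : 0 < z.re + ‖z‖) : csqrt z ^ 2 = z := by
  have hd : (0:ℝ) < Real.sqrt (2 * (z.re + ‖z‖)) :=
    Real.sqrt_pos.2 (by linarith)
  have hd2 : (Real.sqrt (2 * (z.re + ‖z‖))) ^ 2 = 2 * (z.re + ‖z‖) :=
    Real.sq_sqrt (by linarith)
  have h1 : z * (starRingEnd ℂ) z = ((‖z‖ : ℝ) : ℂ) ^ 2 := by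
    rw [Complex.mul_conj]; norm_cast; rw [Complex.sq_norm]
  have h2 : z + (starRingEnd ℂ) z = ((z.re : ℝ) : ℂ) * 2 := by
    rw [Complex.add_conj]; push_cast; ring
  have key : (z + ((‖z‖ : ℝ):ℂ)) ^ 2
      = z * (((2 * (z.re + ‖z‖) : ℝ)) : ℂ) := by
    push_cast
    linear_combination z * h2 - h1
  have hdc : ((Real.sqrt (2 * (z.re + ‖z‖)) : ℝ) : ℂ) ^ 2
      = (((2 * (z.re + ‖z‖) : ℝ)) : ℂ) := by
    norm_cast
  have hw : (((2 * (z.re + ‖z‖) : ℝ)) : ℂ) ≠ 0 := by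
    exact_mod_cast ne_of_gt (by linarith : (0:ℝ) < 2 * (z.re + ‖z‖))
  rw [csqrt, div_pow, key, hdc, mul_div_assoc, div_self hw, mul_one]

lemma csqrt_im (z : ℂ) : (csqrt z).im = z.im / Real.sqrt (2 * (z.re + ‖z‖)) := by
  set d : ℝ := Real.sqrt (2 * (z.re + ‖z‖)) with hd
  have h1 : (z + ((‖z‖ : ℝ):ℂ)).im = z.im := by simp
  rcases eq_or_ne d 0 with h | h
  · rw [csqrt, ← hd, h]; simp
  · rw [csqrt, ← hd, Complex.div_im]
    simp [Complex.normSq_ofReal, h1]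
    field_simp

lemma csqrt_pos_real {r : ℝ} (hr : 0 < r) : csqrt (r : ℂ) = (Real.sqrt r : ℝ) := by
  have h : (0:ℝ) < (r:ℂ).re + ‖(r:ℂ)‖ := by
    simp [Complex.norm_real, Real.norm_eq_abs, abs_of_pos hr]; linarith
  have h2 := csqrt_sq h
  -- alternative: direct computation
  rw [csqrt]
  simp [Complex.norm_real, Real.norm_eq_abs, abs_of_pos hr]
  rw [← Complex.ofReal_add]
  norm_cast
  have h4 : Real.sqrt 2 * Real.sqrt (2*r) = 2 * Real.sqrt r := by
    rw [← Real.sqrt_mul (by norm_num), show (2:ℝ)*(2*r) = 4*r by ring,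
      Real.sqrt_mul (by norm_num), show (4:ℝ) = 2^2 by norm_num,
      Real.sqrt_sq (by norm_num)]
  rw [show r + r = 2*r by ring, h4, show 2*r/(2*Real.sqrt r) = r / Real.sqrt r by ring,
    Real.div_sqrt]

lemma continuousAt_csqrt {z : ℂ} (h : 0 < z.re + ‖z‖) : ContinuousAt csqrt z := by
  have h1 : Continuous (fun w : ℂ => w + ((‖w‖ : ℝ) : ℂ)) :=
    continuous_id.add (Complex.continuous_ofReal.comp continuous_norm)
  have h2 : Continuous (fun w : ℂ => ((Real.sqrt (2 * (w.re + ‖w‖)) : ℝ) : ℂ)) :=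
    Complex.continuous_ofReal.comp (Real.continuous_sqrt.comp
      (continuous_const.mul (Complex.continuous_re.add continuous_norm)))
  refine ContinuousAt.div h1.continuousAt h2.continuousAt ?_
  simp only [ne_eq, Complex.ofReal_eq_zero]
  positivity

lemma exists_sq (z : ℂ) : ∃ w : ℂ, w ^ 2 = z := by
  rcases lt_or_ge 0 (z.re + ‖z‖) with h | h
  · exact ⟨csqrt z, csqrt_sq h⟩
  · have habs : ‖z‖ ≤ -z.re := by linarith
    have h1 : -z.re ≤ |z.re| := neg_le_abs _
    have h2 : |z.re| ≤ ‖z‖ := Complex.abs_re_le_norm z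
    have h3 : ‖z‖ = -z.re := le_antisymm habs (le_trans h1 h2)
    have him : z.im = 0 := by
      have := Complex.sq_norm z
      rw [h3, Complex.normSq_apply] at this
      nlinarith
    have hre : z.re ≤ 0 := by nlinarith [norm_nonneg z]
    have hz : z = ((z.re : ℝ) : ℂ) := Complex.ext rfl (by simp [him])
    refine ⟨Complex.I * (Real.sqrt (-z.re) : ℝ), ?_⟩
    have hs : (Real.sqrt (-z.re))^2 = -z.re := Real.sq_sqrt (by linarith)
    rw [mul_pow, Complex.I_sq, hz]
    simp only [Complex.ofReal_re]
    have : -(Real.sqrt (-z.re)^2) = z.re := by rw [hs]; ring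
    rw [show ((z.re:ℝ):ℂ) = ((-(Real.sqrt (-z.re)^2) : ℝ) : ℂ) by rw [this]]
    push_cast
    ring

lemma quad_root_zero {C B A w t : ℂ} (hC : C ≠ 0) (hw : w^2 = B^2 - 4*A*C)
    (ht : t = (-B + w)/(2*C)) : A + B*t + C*t^2 = 0 := by
  subst ht
  field_simp
  linear_combination hw

lemma quad_root_zero' {C B A w t : ℂ} (hC : C ≠ 0) (hw : w^2 = B^2 - 4*A*C)
    (ht : t = (-B - w)/(2*C)) : A + B*t + C*t^2 = 0 := by
  subst ht
  field_simp
  linear_combination hw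

lemma quad_lb {p q r c : ℝ} (hp : 0 ≤ p) (hq : 0 ≤ q) (hr : 0 ≤ r)
    (hd : 4*p*r ≤ q^2) (hlb : ∀ s : ℝ, 0 < s → c*s ≤ p + q*s + r*s^2) :
    c ≤ 2*q := by
  by_contra hcon
  push_neg at hcon
  have hcq : 0 < c - q := by linarith
  rcases eq_or_lt_of_le hr with hr0 | hr0
  · -- r = 0
    have hs := hlb (p/(c-q) + 1)
      (add_pos_of_nonneg_of_pos (div_nonneg hp hcq.le) one_pos)
    rw [← hr0] at hs
    have h2 : p/(c-q)*(c-q) = p := div_mul_cancel₀ p hcq.ne'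
    nlinarith
  · rcases eq_or_lt_of_le hp with hp0 | hp0
    · -- p = 0
      have hs := hlb ((c-q)/(2*r)) (by positivity)
      rw [← hp0] at hs
      have hs2 : r * ((c-q)/(2*r)) = (c-q)/2 := by field_simp
      nlinarith [mul_pos (div_pos hcq (by linarith : (0:ℝ) < 2*r)) hcq]
    · -- p, r > 0
      have hrp : 0 < Real.sqrt r := Real.sqrt_pos.2 hr0
      have hpp : 0 < Real.sqrt p := Real.sqrt_pos.2 hp0
      set s := Real.sqrt p / Real.sqrt r with hsdef
      have hsp : 0 < s := by positivity
      have hs := hlb s hsp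
      have h1 : r * s^2 = p := by
        rw [hsdef, div_pow, Real.sq_sqrt hp, Real.sq_sqrt hr]
        field_simp
      have h4 : (2*Real.sqrt p*Real.sqrt r)^2 = 4*p*r := by
        rw [mul_pow, mul_pow, Real.sq_sqrt hp, Real.sq_sqrt hr]; ring
      have h5 : 2*Real.sqrt p*Real.sqrt r ≤ q := by
        nlinarith [Real.sqrt_nonneg p, Real.sqrt_nonneg r]
      have h6 : Real.sqrt p * Real.sqrt r * s = p := by
        rw [hsdef]
        field_simp
        linear_combination Real.mul_self_sqrt hp
      have h7 : 2*Real.sqrt p*Real.sqrt r*s ≤ q*s :=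
        mul_le_mul_of_nonneg_right h5 hsp.le
      nlinarith [mul_pos (by linarith : (0:ℝ) < c - 2*q) hsp]

noncomputable def QP (a b c : ℝ) (z : ℂ) : ℂ := (a:ℝ) + (b:ℝ)*z + (c:ℝ)*z^2

lemma continuous_QP (a b c : ℝ) : Continuous (QP a b c) := by
  unfold QP; continuity

lemma QP_real (a b c s : ℝ) : QP a b c (s:ℂ) = ((a + b*s + c*s^2 : ℝ) : ℂ) := by
  unfold QP; push_cast; ring

lemma gen_lb {a0 a1 a2 b0 b1 b2 c0 c1 c2 : ℝ}
    (ha0 : 0 ≤ a0) (ha1 : 0 ≤ a1) (ha2 : 0 ≤ a2)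
    (hb0 : 0 ≤ b0) (hb1 : 0 ≤ b1) (hb2 : 0 ≤ b2)
    (hc0 : 0 ≤ c0) (hc1 : 0 ≤ c1) (hc2 : 0 ≤ c2)
    (hsum : a0+a1+a2+b0+b1+b2+c0+c1+c2 = 1)
    (hEA : a1+b1+c1+2*(a2+b2+c2) = 1)
    (hEB : b0+b1+b2+2*(c0+c1+c2) = 1) :
    ∀ s t : ℝ, 0 < s → 0 < t →
      s*t ≤ (a0+a1*s+a2*s^2) + (b0+b1*s+b2*s^2)*t + (c0+c1*s+c2*s^2)*t^2 := by
  intro s t hs ht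
  set x := Real.log s with hx
  set y := Real.log t with hy
  have hsx : s = Real.exp x := (Real.exp_log hs).symm
  have hty : t = Real.exp y := (Real.exp_log ht).symm
  set E := Real.exp (x + y) with hE
  have hEst : E = s * t := by rw [hE, Real.exp_add, ← hsx, ← hty]
  have key : ∀ (q : ℝ) (j k : ℕ), 0 ≤ q →
      q * (E * (1 + ((j:ℝ)-1)*x + ((k:ℝ)-1)*y)) ≤ q * (s^j * t^k) := by
    intro q j k hq
    apply mul_le_mul_of_nonneg_left _ hq
    have h1 : s^j*t^k = Real.exp ((j:ℝ)*x + (k:ℝ)*y) := by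
      rw [hsx, hty, ← Real.exp_nat_mul, ← Real.exp_nat_mul, ← Real.exp_add]
    rw [h1, show (j:ℝ)*x + (k:ℝ)*y = (x+y) + (((j:ℝ)-1)*x + ((k:ℝ)-1)*y) by ring,
      Real.exp_add, hE]
    have h2 := Real.add_one_le_exp (((j:ℝ)-1)*x + ((k:ℝ)-1)*y)
    have h3 := Real.exp_pos (x+y)
    nlinarith [Real.exp_pos (((j:ℝ)-1)*x + ((k:ℝ)-1)*y)]
  have h00 := key a0 0 0 ha0
  have h10 := key a1 1 0 ha1
  have h20 := key a2 2 0 ha2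
  have h01 := key b0 0 1 hb0
  have h11 := key b1 1 1 hb1
  have h21 := key b2 2 1 hb2
  have h02 := key c0 0 2 hc0
  have h12 := key c1 1 2 hc1
  have h22 := key c2 2 2 hc2
  norm_num at h00 h10 h20 h01 h11 h21 h02 h12 h22
  have hid : a0 * (E * (1 + (-1)*x + (-1)*y)) + a1 * (E * (1 + (-1)*y))
      + a2 * (E * (1 + x + (-1)*y)) + b0 * (E * (1 + (-1)*x)) + b1 * E
      + b2 * (E * (1 + x)) + c0 * (E * (1 + (-1)*x + y)) + c1 * (E * (1 + y))
      + c2 * (E * (1 + x + y)) = E := by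
    linear_combination (E*(1 - x - y)) * hsum + (E*x) * hEA + (E*y) * hEB
  rw [← hEst]
  nlinarith [h00, h10, h20, h01, h11, h21, h02, h12, h22, hid]


lemma col_disc {a0 a1 a2 b0 b1 b2 c0 c1 c2 : ℝ}
    (ha0 : 0 ≤ a0) (ha1 : 0 ≤ a1) (ha2 : 0 ≤ a2)
    (hc0 : 0 ≤ c0) (hc1 : 0 ≤ c1) (hc2 : 0 ≤ c2)
    (hstab : ∀ s t : ℂ, 0 < s.im → 0 < t.im →
      QP a0 a1 a2 s + QP b0 b1 b2 s * t + QP c0 c1 c2 s * t^2 ≠ 0) :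
    ∀ s : ℝ, 0 < s →
      4*(a0+a1*s+a2*s^2)*(c0+c1*s+c2*s^2) ≤ (b0+b1*s+b2*s^2)^2 := by
  intro s hs
  by_contra hcon
  push_neg at hcon
  set As := a0+a1*s+a2*s^2 with hAs
  set Bs := b0+b1*s+b2*s^2 with hBs
  set Cs := c0+c1*s+c2*s^2 with hCs
  have hA0 : 0 ≤ As := by
    have := mul_nonneg ha1 hs.le
    have := mul_nonneg ha2 (sq_nonneg s)
    rw [hAs]; nlinarith
  have hC0 : 0 ≤ Cs := by
    have := mul_nonneg hc1 hs.le
    have := mul_nonneg hc2 (sq_nonneg s)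
    rw [hCs]; nlinarith
  have hCpos : 0 < Cs := by
    rcases eq_or_lt_of_le hC0 with h | h
    · exfalso; nlinarith [sq_nonneg Bs]
    · exact h
  set Ds : ℝ := Bs^2 - 4*As*Cs with hDs
  have hDneg : Ds < 0 := by rw [hDs]; linarith
  set l : Filter ℝ := nhdsWithin 0 (Set.Ioi 0) with hl
  set z : ℝ → ℂ := fun δ => (s:ℂ) + δ * Complex.I with hzdef
  set D : ℝ → ℂ := fun δ =>
    (QP b0 b1 b2 (z δ))^2 - 4*(QP a0 a1 a2 (z δ))*(QP c0 c1 c2 (z δ)) with hDdef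
  set W : ℝ → ℂ := fun δ => Complex.I * csqrt (-(D δ)) with hWdef
  set tf : ℝ → ℂ := fun δ => (-(QP b0 b1 b2 (z δ)) + W δ)/(2*(QP c0 c1 c2 (z δ))) with htfdef
  -- limits
  have hz : Tendsto z l (𝓝 (s:ℂ)) := by
    have hc : Continuous z := by rw [hzdef]; continuity
    rw [hl]
    refine Tendsto.mono_left ?_ nhdsWithin_le_nhds
    have := hc.tendsto 0
    simpa [hzdef] using this
  have hQA : Tendsto (fun δ => QP a0 a1 a2 (z δ)) l (𝓝 ((As:ℝ):ℂ)) := by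
    have := ((continuous_QP a0 a1 a2).tendsto _).comp hz
    rwa [QP_real, ← hAs] at this
  have hQB : Tendsto (fun δ => QP b0 b1 b2 (z δ)) l (𝓝 ((Bs:ℝ):ℂ)) := by
    have := ((continuous_QP b0 b1 b2).tendsto _).comp hz
    rwa [QP_real, ← hBs] at this
  have hQC : Tendsto (fun δ => QP c0 c1 c2 (z δ)) l (𝓝 ((Cs:ℝ):ℂ)) := by
    have := ((continuous_QP c0 c1 c2).tendsto _).comp hz
    rwa [QP_real, ← hCs] at this
  have hD : Tendsto D l (𝓝 ((Ds:ℝ):ℂ)) := by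
    have : Tendsto (fun δ => (QP b0 b1 b2 (z δ))^2
        - 4*(QP a0 a1 a2 (z δ))*(QP c0 c1 c2 (z δ))) l
        (𝓝 (((Bs:ℝ):ℂ)^2 - 4*((As:ℝ):ℂ)*((Cs:ℝ):ℂ))) := by
      exact ((hQB.pow 2).sub ((hQA.const_mul 4).mul hQC))
    rw [hDdef]
    convert this using 2
    rw [hDs]; push_cast; ring
  have hnD : Tendsto (fun δ => -(D δ)) l (𝓝 ((-Ds:ℝ):ℂ)) := by
    have := hD.neg; rwa [show ((-Ds:ℝ):ℂ) = -((Ds:ℝ):ℂ) by push_cast; ring]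
  have hre : (0:ℝ) < ((-Ds:ℝ):ℂ).re + ‖((-Ds:ℝ):ℂ)‖ := by
    have h1 : ((-Ds:ℝ):ℂ).re = -Ds := Complex.ofReal_re _
    have h2 : ‖((-Ds:ℝ):ℂ)‖ = -Ds := by
      rw [Complex.norm_real, Real.norm_eq_abs, abs_of_pos (by linarith : (0:ℝ) < -Ds)]
    rw [h1, h2]; linarith
  have hW : Tendsto W l (𝓝 (Complex.I * csqrt ((-Ds:ℝ):ℂ))) := by
    exact tendsto_const_nhds.mul ((continuousAt_csqrt hre).tendsto.comp hnD)
  have hCne : ((Cs:ℝ):ℂ) ≠ 0 := by exact_mod_cast hCpos.ne'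
  have htf : Tendsto tf l
      (𝓝 ((-((Bs:ℝ):ℂ) + Complex.I * csqrt ((-Ds:ℝ):ℂ))/(2*((Cs:ℝ):ℂ)))) := by
    exact (hQB.neg.add hW).div (hQC.const_mul 2) (by
      simpa using mul_ne_zero (two_ne_zero) hCne)
  -- the limit has positive imaginary part
  set t8 : ℂ := (-((Bs:ℝ):ℂ) + Complex.I * csqrt ((-Ds:ℝ):ℂ))/(2*((Cs:ℝ):ℂ)) with ht8
  have ht8im : 0 < t8.im := by
    rw [ht8, csqrt_pos_real (by linarith : (0:ℝ) < -Ds)]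
    rw [show (2*((Cs:ℝ):ℂ)) = ((2*Cs : ℝ):ℂ) by push_cast; ring]
    rw [Complex.div_ofReal_im]
    simp only [Complex.add_im, Complex.neg_im, Complex.ofReal_im, Complex.mul_im,
      Complex.I_re, Complex.I_im, Complex.ofReal_re, neg_zero]
    have : 0 < Real.sqrt (-Ds) := Real.sqrt_pos.2 (by linarith)
    positivity
  -- eventual facts
  have ev1 : ∀ᶠ δ in l, 0 < δ := by
    rw [hl, eventually_iff]; exact self_mem_nhdsWithin
  have ev2 : ∀ᶠ δ in l, 0 < (tf δ).im :=
    ((Complex.continuous_im.tendsto _).comp htf).eventually (lt_mem_nhds ht8im)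
  have ev3 : ∀ᶠ δ in l, QP c0 c1 c2 (z δ) ≠ 0 := hQC.eventually_ne hCne
  have ev4 : ∀ᶠ δ in l, 0 < (-(D δ)).re + ‖(-(D δ))‖ := by
    have hcont : Tendsto (fun δ => (-(D δ)).re + ‖(-(D δ))‖) l
        (𝓝 (((-Ds:ℝ):ℂ).re + ‖((-Ds:ℝ):ℂ)‖)) :=
      ((Complex.continuous_re.tendsto _).comp hnD).add
        ((continuous_norm.tendsto _).comp hnD)
    exact hcont.eventually (lt_mem_nhds hre)
  have : l.NeBot := nhdsGT_neBot 0
  obtain ⟨δ, hδ1, hδ2, hδ3, hδ4⟩ := (ev1.and (ev2.and (ev3.and ev4))).exists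
  have hW2 : (W δ)^2 = (QP b0 b1 b2 (z δ))^2
      - 4*(QP a0 a1 a2 (z δ))*(QP c0 c1 c2 (z δ)) := by
    rw [hWdef]
    simp only
    rw [mul_pow, Complex.I_sq, csqrt_sq hδ4]
    simp [hDdef]
  have hzero : QP a0 a1 a2 (z δ) + QP b0 b1 b2 (z δ) * tf δ
      + QP c0 c1 c2 (z δ) * (tf δ)^2 = 0 :=
    quad_root_zero hδ3 hW2 rfl
  have hzim : 0 < (z δ).im := by
    rw [hzdef]; simp [hδ1]
  exact hstab (z δ) (tf δ) hzim hδ2 hzero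


lemma div_scale {A P u M : ℂ} {δ : ℂ} (hδ : δ ≠ 0) :
    δ * (A/(P*(δ*u)*M)) = A/(P*u*M) := by
  rcases eq_or_ne (P*u*M) 0 with h|h
  · have h2 : P*(δ*u)*M = δ*(P*u*M) := by ring
    rw [h2, h]
    simp
  · have h2 : P*(δ*u)*M = δ*(P*u*M) := by ring
    rw [h2]
    field_simp

lemma div_scale' {A u M : ℂ} {δ : ℂ} (hδ : δ ≠ 0) :
    δ * (A/((δ*u)*M)) = A/(u*M) := by
  have := div_scale (P := 1) (A := A) (u := u) (M := M) hδ
  simpa using this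

lemma quad_solve {c2 b2 w W t : ℂ} (hc2 : c2 ≠ 0) (hW : W^2 = b2^2 + 4*c2*w)
    (ht : t = (-b2 + W)/(2*c2)) : c2*t^2 + b2*t = w := by
  subst ht
  field_simp
  linear_combination hW

lemma pos_re_add_abs_of_im_ne {z : ℂ} (h : z.im ≠ 0) : 0 < z.re + ‖z‖ := by
  have h1 : ‖z‖ ^ 2 = z.re^2 + z.im^2 := by
    rw [Complex.sq_norm, Complex.normSq_apply]; ring
  have h2 : 0 ≤ ‖z‖ := norm_nonneg z
  by_contra hc
  push_neg at hc
  have h4 : ‖z‖ ≤ -z.re := by linarith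
  have h5 : ‖z‖^2 ≤ z.re^2 := by nlinarith
  have h6 : 0 < z.im^2 := by positivity
  linarith

lemma QP_re (a b c : ℝ) (z : ℂ) :
    (QP a b c z).re = a + b*z.re + c*(z.re^2 - z.im^2) := by
  unfold QP
  simp only [pow_two, Complex.add_re, Complex.mul_re, Complex.mul_im,
    Complex.ofReal_re, Complex.ofReal_im]
  ring

lemma QP_im (a b c : ℝ) (z : ℂ) :
    (QP a b c z).im = b*z.im + c*(2*z.re*z.im) := by
  unfold QP
  simp only [pow_two, Complex.add_im, Complex.mul_re, Complex.mul_im,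
    Complex.ofReal_re, Complex.ofReal_im]
  ring

lemma b_disc {a0 a1 a2 b0 b1 b2 c0 c1 c2 : ℝ}
    (hb0 : 0 ≤ b0) (hb1 : 0 ≤ b1) (hb2 : 0 ≤ b2) (hc2 : 0 ≤ c2)
    (hstab : ∀ s t : ℂ, 0 < s.im → 0 < t.im →
      QP a0 a1 a2 s + QP b0 b1 b2 s * t + QP c0 c1 c2 s * t^2 ≠ 0) :
    4*b0*b2 ≤ b1^2 := by
  by_contra hcon
  push_neg at hcon
  have hb2p : 0 < b2 := by
    rcases hb2.eq_or_lt with h | h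
    · exfalso; nlinarith [sq_nonneg b1]
    · exact h
  have hb0p : 0 < b0 := by
    rcases hb0.eq_or_lt with h | h
    · exfalso; nlinarith [sq_nonneg b1]
    · exact h
  set x : ℝ := -b1/(2*b2) with hxdef
  set y : ℝ := Real.sqrt (4*b0*b2 - b1^2)/(2*b2) with hydef
  have hyp : 0 < y := by
    rw [hydef]
    have : 0 < Real.sqrt (4*b0*b2 - b1^2) := Real.sqrt_pos.2 (by linarith)
    positivity
  have hy2 : y^2 = (4*b0*b2 - b1^2)/(4*b2^2) := by
    rw [hydef, div_pow, Real.sq_sqrt (by linarith : (0:ℝ) ≤ 4*b0*b2 - b1^2)]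
    ring_nf
  set s0 : ℂ := (x:ℝ) + (y:ℝ)*Complex.I with hs0def
  have hs0re : s0.re = x := by rw [hs0def]; simp
  have hs0im : s0.im = y := by rw [hs0def]; simp
  have hb1x : b1 = -2*b2*x := by rw [hxdef]; field_simp
  have hb0xy : b0 = b2*(x^2+y^2) := by
    rw [hy2, hxdef]; field_simp; ring
  have hB0 : QP b0 b1 b2 s0 = 0 := by
    apply Complex.ext
    · rw [QP_re, hs0re, hs0im, hb1x, hb0xy, Complex.zero_re]; ring
    · rw [QP_im, hs0re, hs0im, hb1x, Complex.zero_im]; ring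
  have hconj : (starRingEnd ℂ) s0 = (x:ℝ) - (y:ℝ)*Complex.I := by
    rw [hs0def]
    simp [Complex.ext_iff]
  have hsubne : s0 - (starRingEnd ℂ) s0 ≠ 0 := by
    rw [hs0def, hconj]
    intro h
    have := congrArg Complex.im h
    simp at this
    linarith
  have hadd : s0 + (starRingEnd ℂ) s0 = ((2*x:ℝ):ℂ) := by
    rw [hs0def, hconj]; push_cast; ring
  have hmul : s0 * (starRingEnd ℂ) s0 = ((x^2+y^2:ℝ):ℂ) := by
    rw [hs0def, hconj]
    have hI : Complex.I * Complex.I = -1 := Complex.I_mul_I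
    push_cast
    linear_combination (-(y:ℂ)*(y:ℂ)) * hI
  have Bfact : ∀ z : ℂ, QP b0 b1 b2 z = (b2:ℝ)*(z - s0)*(z - (starRingEnd ℂ) s0) := by
    intro z
    unfold QP
    have h1 : (b1:ℂ) = -2*(b2:ℂ)*(x:ℂ) := by exact_mod_cast congrArg (Complex.ofReal) hb1x
    have h2 : (b0:ℂ) = (b2:ℂ)*((x:ℂ)^2+(y:ℂ)^2) := by
      exact_mod_cast congrArg (Complex.ofReal) hb0xy
    have h3 : ((x^2+y^2:ℝ):ℂ) = (x:ℂ)^2+(y:ℂ)^2 := by push_cast; ring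
    have h4 : ((2*x:ℝ):ℂ) = 2*(x:ℂ) := by push_cast; ring
    linear_combination h2 + z*h1 + (b2:ℂ)*z*(hadd.trans h4) - (b2:ℂ)*(hmul.trans h3)
  set l : Filter ℝ := nhdsWithin 0 (Set.Ioi 0) with hl
  have hlne : l.NeBot := nhdsGT_neBot 0
  have ev_pos : ∀ᶠ δ in l, 0 < δ := by rw [hl, eventually_iff]; exact self_mem_nhdsWithin
  have tendsto_of_cont : ∀ (f : ℝ → ℂ), Continuous f → Tendsto f l (𝓝 (f 0)) := by
    intro f hf
    rw [hl]
    exact (hf.tendsto 0).mono_left nhdsWithin_le_nhds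
  by_cases hCs0 : QP c0 c1 c2 s0 = 0
  · -- CASE II : C(s0) = 0
    have hCim := congrArg Complex.im hCs0
    have hCre := congrArg Complex.re hCs0
    rw [QP_im, hs0re, hs0im] at hCim
    rw [QP_re, hs0re, hs0im] at hCre
    simp at hCim hCre
    have hc1x : c1 = -2*c2*x := by
      have h0 : y*(c1 + 2*c2*x) = 0 := by linarith [hCim]
      rcases mul_eq_zero.1 h0 with h|h
      · linarith
      · linarith
    have hc0xy : c0 = c2*(x^2+y^2) := by nlinarith [hCre, hc1x]
    by_cases hA0 : QP a0 a1 a2 s0 = 0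
    · -- P(s0, i) = 0 since C(s0)=B(s0)=A(s0)=0
      refine hstab s0 Complex.I (by rw [hs0im]; exact hyp) (by rw [Complex.I_im]; norm_num) ?_
      rw [hA0, hB0, hCs0]; ring
    by_cases hc2z : c2 = 0
    · -- C ≡ 0, A(s0) ≠ 0 : t = -A/B trick
      have hc1z : c1 = 0 := by rw [hc1x, hc2z]; ring
      have hc0z : c0 = 0 := by rw [hc0xy, hc2z]; ring
      have hCzero : ∀ z : ℂ, QP c0 c1 c2 z = 0 := by
        intro z; unfold QP; rw [hc0z, hc1z, hc2z]; push_cast; ring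
      set K : ℂ := -QP a0 a1 a2 s0 / ((b2:ℝ)*(s0 - (starRingEnd ℂ) s0)) with hKdef
      have hKne : K ≠ 0 := by
        rw [hKdef]
        exact div_ne_zero (neg_ne_zero.2 hA0)
          (mul_ne_zero (by exact_mod_cast hb2p.ne') hsubne)
      have hKabs : (0:ℝ) < ‖K‖ := norm_pos_iff.2 hKne
      set u : ℂ := -Complex.I*K/((‖K‖ : ℝ):ℂ) with hudef
      have hune : u ≠ 0 := by
        rw [hudef]
        exact div_ne_zero (mul_ne_zero (neg_ne_zero.2 Complex.I_ne_zero) hKne)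
          (by exact_mod_cast hKabs.ne')
      have hKu : K/u = Complex.I*((‖K‖ : ℝ):ℂ) := by
        rw [hudef, div_div_eq_mul_div,
          div_eq_iff (mul_ne_zero (neg_ne_zero.2 Complex.I_ne_zero) hKne)]
        have hI : Complex.I * Complex.I = -1 := Complex.I_mul_I
        linear_combination ((‖K‖ : ℝ):ℂ)*K*hI
      set sd : ℝ → ℂ := fun δ => s0 + (δ:ℝ)*u with hsddef
      set tfun : ℝ → ℂ := fun δ => -QP a0 a1 a2 (sd δ)/QP b0 b1 b2 (sd δ) with htfdef
      have hsd : Tendsto sd l (𝓝 s0) := by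
        have hc : Continuous sd := by
          rw [hsddef]
          exact continuous_const.add (Complex.continuous_ofReal.mul continuous_const)
        have := tendsto_of_cont sd hc
        have h0 : sd 0 = s0 := by rw [hsddef]; simp
        rwa [h0] at this
      have ev_im : ∀ᶠ δ in l, 0 < (sd δ).im := by
        refine ((Complex.continuous_im.tendsto _).comp hsd).eventually (lt_mem_nhds ?_)
        rw [hs0im]; exact hyp
      set g : ℝ → ℂ := fun δ => -QP a0 a1 a2 (sd δ)/((b2:ℝ)*u*(sd δ - (starRingEnd ℂ) s0))
        with hgdef
      have hgval : -QP a0 a1 a2 s0/((b2:ℝ)*u*(s0 - (starRingEnd ℂ) s0))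
          = Complex.I*((‖K‖ : ℝ):ℂ) := by
        rw [← hKu, hKdef]
        rw [show (b2:ℂ)*u*(s0 - (starRingEnd ℂ) s0) = (b2:ℂ)*(s0 - (starRingEnd ℂ) s0)*u
          from by ring]
        rw [div_div]
      have hg : Tendsto g l (𝓝 (Complex.I*((‖K‖ : ℝ):ℂ))) := by
        rw [hgdef, ← hgval]
        refine Tendsto.div ((((continuous_QP a0 a1 a2).tendsto _).comp hsd).neg)
          (tendsto_const_nhds.mul (hsd.sub tendsto_const_nhds)) ?_
        exact mul_ne_zero (mul_ne_zero (by exact_mod_cast hb2p.ne') hune) hsubne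
      have heq : ∀ᶠ δ : ℝ in l, g δ = (δ:ℂ) * tfun δ := by
        filter_upwards [ev_pos] with δ hδ
        have hδne : (δ:ℂ) ≠ 0 := by exact_mod_cast hδ.ne'
        have e1 : sd δ - s0 = (δ:ℂ)*u := by rw [hsddef]; ring
        have e2 : QP b0 b1 b2 (sd δ) = (b2:ℂ)*(((δ:ℂ))*u)*(sd δ - (starRingEnd ℂ) s0) := by
          rw [Bfact (sd δ), e1]
        have key : (δ:ℂ) * tfun δ = g δ := by
          show (δ:ℂ) * (-QP a0 a1 a2 (sd δ)/QP b0 b1 b2 (sd δ))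
              = -QP a0 a1 a2 (sd δ)/((b2:ℂ)*u*(sd δ - (starRingEnd ℂ) s0))
          rw [e2]
          exact div_scale hδne
        exact key.symm
      have htends : Tendsto (fun δ : ℝ => (δ:ℂ) * tfun δ) l
          (𝓝 (Complex.I*((‖K‖ : ℝ):ℂ))) := Tendsto.congr' heq hg
      have ev_tim : ∀ᶠ δ : ℝ in l, 0 < ((δ:ℂ) * tfun δ).im := by
        refine ((Complex.continuous_im.tendsto _).comp htends).eventually (lt_mem_nhds ?_)
        simp [hKabs]
      obtain ⟨δ, hδ1, hδ2, hδ3⟩ := (ev_pos.and (ev_im.and ev_tim)).exists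
      have htim : 0 < (tfun δ).im := by
        have he : ((δ:ℂ) * tfun δ).im = δ * (tfun δ).im := by
          simp [Complex.mul_im]
        rw [he] at hδ3
        rcases mul_pos_iff.1 hδ3 with ⟨_, h⟩ | ⟨h, _⟩
        · exact h
        · linarith
      have hBne : QP b0 b1 b2 (sd δ) ≠ 0 := by
        rw [Bfact (sd δ)]
        refine mul_ne_zero (mul_ne_zero (by exact_mod_cast hb2p.ne') ?_) ?_
        · rw [show sd δ - s0 = (δ:ℂ)*u from by rw [hsddef]; ring]
          exact mul_ne_zero (by exact_mod_cast hδ1.ne') hune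
        · intro h
          have h2 := congrArg Complex.im h
          rw [Complex.sub_im, Complex.zero_im, hconj] at h2
          simp at h2
          linarith
      refine hstab (sd δ) (tfun δ) hδ2 htim ?_
      have ht : tfun δ = -QP a0 a1 a2 (sd δ)/QP b0 b1 b2 (sd δ) := by rw [htfdef]
      rw [hCzero, ht]
      field_simp
      ring
    · -- CII-b : c2 ≠ 0, A(s0) ≠ 0
      have hc2p : 0 < c2 := lt_of_le_of_ne hc2 (Ne.symm hc2z)
      have Cfact : ∀ z : ℂ, QP c0 c1 c2 z = (c2:ℝ)*(z - s0)*(z - (starRingEnd ℂ) s0) := by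
        intro z
        unfold QP
        have h1 : (c1:ℂ) = -2*(c2:ℂ)*(x:ℂ) := by exact_mod_cast congrArg (Complex.ofReal) hc1x
        have h2 : (c0:ℂ) = (c2:ℂ)*((x:ℂ)^2+(y:ℂ)^2) := by
          exact_mod_cast congrArg (Complex.ofReal) hc0xy
        have h3 : ((x^2+y^2:ℝ):ℂ) = (x:ℂ)^2+(y:ℂ)^2 := by push_cast; ring
        have h4 : ((2*x:ℝ):ℂ) = 2*(x:ℂ) := by push_cast; ring
        linear_combination h2 + z*h1 + (c2:ℂ)*z*(hadd.trans h4) - (c2:ℂ)*(hmul.trans h3)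
      set K : ℂ := -QP a0 a1 a2 s0 / (s0 - (starRingEnd ℂ) s0) with hKdef
      have hKne : K ≠ 0 := by
        rw [hKdef]
        exact div_ne_zero (neg_ne_zero.2 hA0) hsubne
      have hKabs : (0:ℝ) < ‖K‖ := norm_pos_iff.2 hKne
      set u : ℂ := -Complex.I*K/((‖K‖ : ℝ):ℂ) with hudef
      have hune : u ≠ 0 := by
        rw [hudef]
        exact div_ne_zero (mul_ne_zero (neg_ne_zero.2 Complex.I_ne_zero) hKne)
          (by exact_mod_cast hKabs.ne')
      have hKu : K/u = Complex.I*((‖K‖ : ℝ):ℂ) := by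
        rw [hudef, div_div_eq_mul_div,
          div_eq_iff (mul_ne_zero (neg_ne_zero.2 Complex.I_ne_zero) hKne)]
        have hI : Complex.I * Complex.I = -1 := Complex.I_mul_I
        linear_combination ((‖K‖ : ℝ):ℂ)*K*hI
      set sd : ℝ → ℂ := fun δ => s0 + (δ:ℝ)*u with hsddef
      set wfun : ℝ → ℂ :=
        fun δ => -QP a0 a1 a2 (sd δ)/((sd δ - s0)*(sd δ - (starRingEnd ℂ) s0)) with hwdef
      have hsd : Tendsto sd l (𝓝 s0) := by
        have hc : Continuous sd := by
          rw [hsddef]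
          exact continuous_const.add (Complex.continuous_ofReal.mul continuous_const)
        have := tendsto_of_cont sd hc
        have h0 : sd 0 = s0 := by rw [hsddef]; simp
        rwa [h0] at this
      have ev_im : ∀ᶠ δ in l, 0 < (sd δ).im := by
        refine ((Complex.continuous_im.tendsto _).comp hsd).eventually (lt_mem_nhds ?_)
        rw [hs0im]; exact hyp
      set g : ℝ → ℂ := fun δ => -QP a0 a1 a2 (sd δ)/(u*(sd δ - (starRingEnd ℂ) s0))
        with hgdef
      have hgval : -QP a0 a1 a2 s0/(u*(s0 - (starRingEnd ℂ) s0))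
          = Complex.I*((‖K‖ : ℝ):ℂ) := by
        rw [← hKu, hKdef]
        rw [show u*(s0 - (starRingEnd ℂ) s0) = (s0 - (starRingEnd ℂ) s0)*u from by ring]
        rw [div_div]
      have hg : Tendsto g l (𝓝 (Complex.I*((‖K‖ : ℝ):ℂ))) := by
        rw [hgdef, ← hgval]
        refine Tendsto.div ((((continuous_QP a0 a1 a2).tendsto _).comp hsd).neg)
          (tendsto_const_nhds.mul (hsd.sub tendsto_const_nhds)) ?_
        exact mul_ne_zero hune hsubne
      have heq : ∀ᶠ δ : ℝ in l, g δ = (δ:ℂ) * wfun δ := by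
        filter_upwards [ev_pos] with δ hδ
        have hδne : (δ:ℂ) ≠ 0 := by exact_mod_cast hδ.ne'
        have e1 : sd δ - s0 = (δ:ℂ)*u := by rw [hsddef]; ring
        have key : (δ:ℂ) * wfun δ = g δ := by
          show (δ:ℂ) * (-QP a0 a1 a2 (sd δ)/((sd δ - s0)*(sd δ - (starRingEnd ℂ) s0)))
              = -QP a0 a1 a2 (sd δ)/(u*(sd δ - (starRingEnd ℂ) s0))
          rw [e1]
          exact div_scale' hδne
        exact key.symm
      have htends : Tendsto (fun δ : ℝ => (δ:ℂ) * wfun δ) l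
          (𝓝 (Complex.I*((‖K‖ : ℝ):ℂ))) := Tendsto.congr' heq hg
      have ev_tim : ∀ᶠ δ : ℝ in l, 0 < ((δ:ℂ) * wfun δ).im := by
        refine ((Complex.continuous_im.tendsto _).comp htends).eventually (lt_mem_nhds ?_)
        simp [hKabs]
      obtain ⟨δ, hδ1, hδ2, hδ3⟩ := (ev_pos.and (ev_im.and ev_tim)).exists
      have hwim : 0 < (wfun δ).im := by
        have he : ((δ:ℂ) * wfun δ).im = δ * (wfun δ).im := by
          simp [Complex.mul_im]
        rw [he] at hδ3
        rcases mul_pos_iff.1 hδ3 with ⟨_, h⟩ | ⟨h, _⟩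
        · exact h
        · linarith
      have hsdne1 : sd δ - s0 ≠ 0 := by
        rw [show sd δ - s0 = (δ:ℂ)*u from by rw [hsddef]; ring]
        exact mul_ne_zero (by exact_mod_cast hδ1.ne') hune
      have hsdne2 : sd δ - (starRingEnd ℂ) s0 ≠ 0 := by
        intro h
        have h2 := congrArg Complex.im h
        rw [Complex.sub_im, Complex.zero_im, hconj] at h2
        simp at h2
        linarith
      have hMne : (sd δ - s0)*(sd δ - (starRingEnd ℂ) s0) ≠ 0 := mul_ne_zero hsdne1 hsdne2
      -- construct t in upper half plane solving c2 t^2 + b2 t = w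
      set dsc : ℂ := ((b2:ℝ):ℂ)^2 + 4*((c2:ℝ):ℂ)*(wfun δ) with hdscdef
      have hdscim : dsc.im = 4*c2*(wfun δ).im := by
        rw [hdscdef]
        simp [Complex.add_im, Complex.mul_im, Complex.mul_re, pow_two]
      have hdscip : 0 < dsc.im := by
        rw [hdscim]; positivity
      have hvalid : 0 < dsc.re + ‖dsc‖ :=
        pos_re_add_abs_of_im_ne (ne_of_gt hdscip)
      set tt : ℂ := (-((b2:ℝ):ℂ) + csqrt dsc)/(((2*c2:ℝ)):ℂ) with httdef
      have httim : 0 < tt.im := by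
        rw [httdef, Complex.div_ofReal_im]
        have h1 : (-((b2:ℝ):ℂ) + csqrt dsc).im = (csqrt dsc).im := by
          simp [Complex.add_im]
        rw [h1, csqrt_im]
        have h2 : 0 < Real.sqrt (2*(dsc.re + ‖dsc‖)) :=
          Real.sqrt_pos.2 (by linarith)
        positivity
      have hquad : ((c2:ℝ):ℂ)*tt^2 + ((b2:ℝ):ℂ)*tt = wfun δ := by
        refine quad_solve (by exact_mod_cast hc2p.ne') (csqrt_sq hvalid) ?_
        rw [httdef]
        congr 1
        push_cast
        ring
      refine hstab (sd δ) tt hδ2 httim ?_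
      rw [Bfact (sd δ), Cfact (sd δ)]
      have hfin : QP a0 a1 a2 (sd δ) + ((b2:ℝ):ℂ)*(sd δ - s0)*(sd δ - (starRingEnd ℂ) s0)*tt
          + ((c2:ℝ):ℂ)*(sd δ - s0)*(sd δ - (starRingEnd ℂ) s0)*tt^2
          = QP a0 a1 a2 (sd δ) + ((sd δ - s0)*(sd δ - (starRingEnd ℂ) s0))
            *(((c2:ℝ):ℂ)*tt^2 + ((b2:ℝ):ℂ)*tt) := by ring
      rw [hfin, hquad]
      have hwd : wfun δ = -QP a0 a1 a2 (sd δ)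
          /((sd δ - s0)*(sd δ - (starRingEnd ℂ) s0)) := by rw [hwdef]
      rw [hwd]
      field_simp
      ring
  · -- CASE I : C(s0) ≠ 0, perturb with ε
    set Dr : ℝ := b1^2 - 4*b0*b2 with hDrdef
    have hDrneg : Dr < 0 := by rw [hDrdef]; linarith
    set q0 : ℝ → ℂ := fun ε => (b0:ℝ) + 2*(ε:ℝ)*Complex.I*(c0:ℝ) with hq0def
    set q1 : ℝ → ℂ := fun ε => (b1:ℝ) + 2*(ε:ℝ)*Complex.I*(c1:ℝ) with hq1def
    set q2 : ℝ → ℂ := fun ε => (b2:ℝ) + 2*(ε:ℝ)*Complex.I*(c2:ℝ) with hq2def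
    set Dq : ℝ → ℂ := fun ε => (q1 ε)^2 - 4*(q0 ε)*(q2 ε) with hDqdef
    set W : ℝ → ℂ := fun ε => Complex.I * csqrt (-(Dq ε)) with hWdef
    set sE : ℝ → ℂ := fun ε => (-(q1 ε) + W ε)/(2*(q2 ε)) with hsEdef
    have hq2ne : ∀ ε : ℝ, q2 ε ≠ 0 := by
      intro ε h
      have := congrArg Complex.re h
      rw [hq2def] at this
      simp [Complex.add_re, Complex.mul_re, Complex.mul_im] at this
      linarith
    have hq0c : Continuous q0 := by
      rw [hq0def]
      exact continuous_const.add
        (((continuous_const.mul Complex.continuous_ofReal).mul continuous_const).mul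
          continuous_const)
    have hq1c : Continuous q1 := by
      rw [hq1def]
      exact continuous_const.add
        (((continuous_const.mul Complex.continuous_ofReal).mul continuous_const).mul
          continuous_const)
    have hq2c : Continuous q2 := by
      rw [hq2def]
      exact continuous_const.add
        (((continuous_const.mul Complex.continuous_ofReal).mul continuous_const).mul
          continuous_const)
    have hDq : Tendsto Dq l (𝓝 ((Dr:ℝ):ℂ)) := by
      have hc : Continuous Dq := by
        rw [hDqdef]
        exact (hq1c.pow 2).sub ((continuous_const.mul hq0c).mul hq2c)
      have h0 : Dq 0 = ((Dr:ℝ):ℂ) := by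
        rw [hDqdef, hq0def, hq1def, hq2def, hDrdef]
        push_cast
        ring
      have := tendsto_of_cont Dq hc
      rwa [h0] at this
    have hnDq : Tendsto (fun ε => -(Dq ε)) l (𝓝 ((-Dr:ℝ):ℂ)) := by
      have := hDq.neg
      rwa [show ((-Dr:ℝ):ℂ) = -((Dr:ℝ):ℂ) by push_cast; ring]
    have hre : (0:ℝ) < ((-Dr:ℝ):ℂ).re + ‖((-Dr:ℝ):ℂ)‖ := by
      have h1 : ((-Dr:ℝ):ℂ).re = -Dr := Complex.ofReal_re _
      have h2 : ‖((-Dr:ℝ):ℂ)‖ = -Dr := by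
        rw [Complex.norm_real, Real.norm_eq_abs, abs_of_pos (by linarith : (0:ℝ) < -Dr)]
      rw [h1, h2]; linarith
    have hW : Tendsto W l (𝓝 (Complex.I * csqrt ((-Dr:ℝ):ℂ))) := by
      rw [hWdef]
      exact tendsto_const_nhds.mul ((continuousAt_csqrt hre).tendsto.comp hnDq)
    have hq1t : Tendsto q1 l (𝓝 ((b1:ℝ):ℂ)) := by
      have := tendsto_of_cont q1 hq1c
      have h0 : q1 0 = ((b1:ℝ):ℂ) := by rw [hq1def]; norm_num
      rwa [h0] at this
    have hq2t : Tendsto q2 l (𝓝 ((b2:ℝ):ℂ)) := by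
      have := tendsto_of_cont q2 hq2c
      have h0 : q2 0 = ((b2:ℝ):ℂ) := by rw [hq2def]; norm_num
      rwa [h0] at this
    have h2b2ne : 2*((b2:ℝ):ℂ) ≠ 0 := by
      refine mul_ne_zero two_ne_zero ?_
      exact_mod_cast hb2p.ne'
    have hsEt : Tendsto sE l (𝓝 ((-((b1:ℝ):ℂ) + Complex.I * csqrt ((-Dr:ℝ):ℂ))/(2*((b2:ℝ):ℂ)))) := by
      rw [hsEdef]
      exact (hq1t.neg.add hW).div (hq2t.const_mul 2) h2b2ne
    have hyval : 2*b2*y = Real.sqrt (-Dr) := by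
      rw [hydef, hDrdef]
      rw [show -(b1^2 - 4*b0*b2) = 4*b0*b2 - b1^2 by ring]
      field_simp
    have hslim : (-((b1:ℝ):ℂ) + Complex.I * csqrt ((-Dr:ℝ):ℂ))/(2*((b2:ℝ):ℂ)) = s0 := by
      rw [csqrt_pos_real (by linarith : (0:ℝ) < -Dr)]
      rw [div_eq_iff h2b2ne, hs0def]
      have e1 : ((2*b2*x : ℝ):ℂ) = -((b1:ℝ):ℂ) := by
        exact_mod_cast congrArg Complex.ofReal (by rw [hb1x]; ring : 2*b2*x = -b1)
      have e2 : ((2*b2*y : ℝ):ℂ) = ((Real.sqrt (-Dr):ℝ):ℂ) := congrArg Complex.ofReal hyval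
      push_cast at e1 e2 ⊢
      linear_combination -e1 - Complex.I * e2
    rw [hslim] at hsEt
    have ev_im : ∀ᶠ ε in l, 0 < (sE ε).im := by
      refine ((Complex.continuous_im.tendsto _).comp hsEt).eventually (lt_mem_nhds ?_)
      rw [hs0im]; exact hyp
    have ev_C : ∀ᶠ ε in l, QP c0 c1 c2 (sE ε) ≠ 0 :=
      (((continuous_QP c0 c1 c2).tendsto _).comp hsEt).eventually_ne hCs0
    have ev_valid : ∀ᶠ ε in l, 0 < (-(Dq ε)).re + ‖(-(Dq ε))‖ := by
      have hcont : Tendsto (fun ε => (-(Dq ε)).re + ‖(-(Dq ε))‖) l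
          (𝓝 (((-Dr:ℝ):ℂ).re + ‖((-Dr:ℝ):ℂ)‖)) :=
        ((Complex.continuous_re.tendsto _).comp hnDq).add
          ((continuous_norm.tendsto _).comp hnDq)
      exact hcont.eventually (lt_mem_nhds hre)
    obtain ⟨ε, hε1, hε2, hε3, hε4⟩ := (ev_pos.and (ev_im.and (ev_C.and ev_valid))).exists
    have hW2 : (W ε)^2 = (q1 ε)^2 - 4*(q0 ε)*(q2 ε) := by
      rw [hWdef]
      simp only
      rw [mul_pow, Complex.I_sq, csqrt_sq hε4]
      rw [hDqdef]
      ring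
    have hroot : q0 ε + q1 ε * sE ε + q2 ε * (sE ε)^2 = 0 :=
      quad_root_zero (hq2ne ε) hW2 rfl
    have hkey : QP b0 b1 b2 (sE ε) + 2*(ε:ℝ)*Complex.I*(QP c0 c1 c2 (sE ε)) = 0 := by
      rw [← hroot, hq0def, hq1def, hq2def]
      unfold QP
      simp only
      ring
    set s' : ℂ := sE ε with hs'def
    set Aq : ℂ := QP a0 a1 a2 s' with hAqdef
    set Bq : ℂ := QP b0 b1 b2 s' with hBqdef
    set Cq : ℂ := QP c0 c1 c2 s' with hCqdef
    obtain ⟨w, hw⟩ := exists_sq (Bq^2 - 4*Aq*Cq)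
    have hα : Aq + Bq*((-Bq+w)/(2*Cq)) + Cq*((-Bq+w)/(2*Cq))^2 = 0 :=
      quad_root_zero hε3 hw rfl
    have hβ : Aq + Bq*((-Bq-w)/(2*Cq)) + Cq*((-Bq-w)/(2*Cq))^2 = 0 :=
      quad_root_zero' hε3 hw rfl
    have himα : ((-Bq+w)/(2*Cq)).im ≤ 0 := by
      by_contra h
      push_neg at h
      exact hstab s' _ hε2 h hα
    have himβ : ((-Bq-w)/(2*Cq)).im ≤ 0 := by
      by_contra h
      push_neg at h
      exact hstab s' _ hε2 h hβ
    have hsum : (-Bq+w)/(2*Cq) + (-Bq-w)/(2*Cq) = 2*(ε:ℝ)*Complex.I := by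
      rw [← add_div, div_eq_iff (mul_ne_zero two_ne_zero hε3)]
      linear_combination -2*hkey
    have := congrArg Complex.im hsum
    rw [Complex.add_im] at this
    have h2ε : (2*(ε:ℝ)*Complex.I : ℂ).im = 2*ε := by
      simp [Complex.mul_im]
    rw [h2ε] at this
    linarith


lemma master {a0 a1 a2 b0 b1 b2 c0 c1 c2 : ℝ}
    (ha0 : 0 ≤ a0) (ha1 : 0 ≤ a1) (ha2 : 0 ≤ a2)
    (hb0 : 0 ≤ b0) (hb1 : 0 ≤ b1) (hb2 : 0 ≤ b2)
    (hc0 : 0 ≤ c0) (hc1 : 0 ≤ c1) (hc2 : 0 ≤ c2)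
    (hsum : a0+a1+a2+b0+b1+b2+c0+c1+c2 = 1)
    (hEA : a1+b1+c1+2*(a2+b2+c2) = 1)
    (hEB : b0+b1+b2+2*(c0+c1+c2) = 1)
    (hstab : ∀ s t : ℂ, 0 < s.im → 0 < t.im →
      QP a0 a1 a2 s + QP b0 b1 b2 s * t + QP c0 c1 c2 s * t^2 ≠ 0) :
    1/4 ≤ b1 := by
  have hS1 := gen_lb ha0 ha1 ha2 hb0 hb1 hb2 hc0 hc1 hc2 hsum hEA hEB
  have hS2 := col_disc ha0 ha1 ha2 hc0 hc1 hc2 hstab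
  have hS3 := b_disc hb0 hb1 hb2 hc2 hstab
  have hS4 : ∀ s : ℝ, 0 < s → s ≤ 2*(b0+b1*s+b2*s^2) := by
    intro s hs
    have hp : 0 ≤ a0+a1*s+a2*s^2 := by positivity
    have hq : 0 ≤ b0+b1*s+b2*s^2 := by positivity
    have hr : 0 ≤ c0+c1*s+c2*s^2 := by positivity
    exact quad_lb hp hq hr (hS2 s hs) (fun t ht => hS1 s t hs ht)
  have h5 := quad_lb (c := 1/2) hb0 hb1 hb2 hS3 (fun s hs => by linarith [hS4 s hs])
  linarith


/-- Let `μ` be a strongly Rayleigh distribution (its generating polynomial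
`Σ_T μ(T)·Π_{i ∈ T} x_i` has no zeros with all coordinates of positive imaginary part)
over subsets of a ground set partitioned as `A ∪ B` with `|A| = |B| = 2`, so `|A ∩ T| ≤ 2`
and `|B ∩ T| ≤ 2` always.  If `E[|A ∩ T|] = E[|B ∩ T|] = 1`, then
`P[|A ∩ T| = 1 and |B ∩ T| = 1] ≥ 1/4`. -/
theorem strongly_rayleigh_pair_bound {α : Type*} [Fintype α] [DecidableEq α]
    (A B : Finset α) (hAB : Disjoint A B)
    (hA : A.card = 2) (hB : B.card = 2) (hcover : A ∪ B = Finset.univ)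
    (μ : Finset α → ℝ) (hμ0 : ∀ T, 0 ≤ μ T) (hμ1 : ∑ T : Finset α, μ T = 1)
    (hSR : ∀ x : α → ℂ, (∀ i, 0 < (x i).im) →
      ∑ T : Finset α, (μ T : ℂ) * ∏ i ∈ T, x i ≠ 0)
    (hEA : ∑ T : Finset α, μ T * ((A ∩ T).card : ℝ) = 1)
    (hEB : ∑ T : Finset α, μ T * ((B ∩ T).card : ℝ) = 1) :
    (1 : ℝ) / 4 ≤
      ∑ T ∈ Finset.univ.filter
        (fun T : Finset α => (A ∩ T).card = 1 ∧ (B ∩ T).card = 1), μ T := by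
  classical
  set cA : Finset α → ℕ := fun T => (A ∩ T).card with hcA
  set cB : Finset α → ℕ := fun T => (B ∩ T).card with hcB
  have hmaps : ∀ T ∈ (Finset.univ : Finset (Finset α)),
      (cA T, cB T) ∈ Finset.range 3 ×ˢ Finset.range 3 := by
    intro T _
    simp only [Finset.mem_product, Finset.mem_range]
    simp only [hcA, hcB]
    constructor
    · have h := Finset.card_le_card (Finset.inter_subset_left : A ∩ T ⊆ A)
      omega
    · have h := Finset.card_le_card (Finset.inter_subset_left : B ∩ T ⊆ B)
      omega
  set q : ℕ → ℕ → ℝ := fun j k =>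
    ∑ T ∈ Finset.univ.filter (fun T : Finset α => cA T = j ∧ cB T = k), μ T with hq
  have hfib : ∀ j k : ℕ,
      Finset.univ.filter (fun T : Finset α => (cA T, cB T) = (j, k))
        = Finset.univ.filter (fun T : Finset α => cA T = j ∧ cB T = k) := by
    intro j k
    apply Finset.filter_congr
    intro T _
    simp [Prod.ext_iff]
  have key : ∀ f : ℕ → ℕ → ℝ,
      ∑ T : Finset α, μ T * f (cA T) (cB T)
        = ∑ j ∈ Finset.range 3, ∑ k ∈ Finset.range 3, q j k * f j k := by
    intro f
    rw [← Finset.sum_fiberwise_of_maps_to hmaps (fun T => μ T * f (cA T) (cB T))]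
    rw [Finset.sum_product]
    refine Finset.sum_congr rfl fun j _ => Finset.sum_congr rfl fun k _ => ?_
    rw [hfib j k]
    rw [show (∑ T ∈ Finset.univ.filter (fun T : Finset α => cA T = j ∧ cB T = k),
        μ T * f (cA T) (cB T))
      = ∑ T ∈ Finset.univ.filter (fun T : Finset α => cA T = j ∧ cB T = k), μ T * f j k
      from Finset.sum_congr rfl fun T hT => by
        obtain ⟨h1, h2⟩ := (Finset.mem_filter.1 hT).2
        rw [h1, h2]]
    rw [hq, ← Finset.sum_mul]
  have keyC : ∀ g : ℕ → ℕ → ℂ,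
      ∑ T : Finset α, (μ T : ℂ) * g (cA T) (cB T)
        = ∑ j ∈ Finset.range 3, ∑ k ∈ Finset.range 3, ((q j k : ℝ) : ℂ) * g j k := by
    intro g
    rw [← Finset.sum_fiberwise_of_maps_to hmaps (fun T => (μ T : ℂ) * g (cA T) (cB T))]
    rw [Finset.sum_product]
    refine Finset.sum_congr rfl fun j _ => Finset.sum_congr rfl fun k _ => ?_
    rw [hfib j k]
    rw [show (∑ T ∈ Finset.univ.filter (fun T : Finset α => cA T = j ∧ cB T = k),
        (μ T : ℂ) * g (cA T) (cB T))
      = ∑ T ∈ Finset.univ.filter (fun T : Finset α => cA T = j ∧ cB T = k), (μ T : ℂ) * g j k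
      from Finset.sum_congr rfl fun T hT => by
        obtain ⟨h1, h2⟩ := (Finset.mem_filter.1 hT).2
        rw [h1, h2]]
    rw [hq, ← Finset.sum_mul]
    push_cast
    ring
  have hqnn : ∀ j k, 0 ≤ q j k := by
    intro j k
    exact Finset.sum_nonneg fun T _ => hμ0 T
  -- sum = 1
  have h1 := key (fun _ _ => 1)
  simp only [mul_one] at h1
  rw [hμ1] at h1
  simp [Finset.sum_range_succ] at h1
  -- E A
  have h2 := key (fun j _ => (j:ℝ))
  rw [show (∑ T : Finset α, μ T * ((cA T : ℕ):ℝ)) = 1 from by rw [← hEA]] at h2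
  simp [Finset.sum_range_succ] at h2
  -- E B
  have h3 := key (fun _ k => (k:ℝ))
  rw [show (∑ T : Finset α, μ T * ((cB T : ℕ):ℝ)) = 1 from by rw [← hEB]] at h3
  simp [Finset.sum_range_succ] at h3
  -- stability
  have hstab : ∀ s t : ℂ, 0 < s.im → 0 < t.im →
      QP (q 0 0) (q 1 0) (q 2 0) s + QP (q 0 1) (q 1 1) (q 2 1) s * t
        + QP (q 0 2) (q 1 2) (q 2 2) s * t^2 ≠ 0 := by
    intro s t hs ht h0
    set x : α → ℂ := fun i => if i ∈ A then s else t with hx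
    have hxim : ∀ i, 0 < (x i).im := by
      intro i
      rw [hx]
      by_cases h : i ∈ A <;> simp [h, hs, ht]
    apply hSR x hxim
    have hprod : ∀ T : Finset α, (∏ i ∈ T, x i) = s^(cA T) * t^(cB T) := by
      intro T
      rw [← Finset.prod_filter_mul_prod_filter_not T (fun i => i ∈ A)]
      have e1 : T.filter (fun i => i ∈ A) = A ∩ T := by
        rw [Finset.filter_mem_eq_inter, Finset.inter_comm]
      have e2 : T.filter (fun i => ¬ i ∈ A) = B ∩ T := by
        ext i
        simp only [Finset.mem_filter, Finset.mem_inter]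
        constructor
        · rintro ⟨hiT, hiA⟩
          refine ⟨?_, hiT⟩
          have : i ∈ A ∪ B := hcover ▸ Finset.mem_univ i
          rcases Finset.mem_union.1 this with h | h
          · exact absurd h hiA
          · exact h
        · rintro ⟨hiB, hiT⟩
          exact ⟨hiT, fun hiA => (Finset.disjoint_left.1 hAB) hiA hiB⟩
      have p1 : ∏ i ∈ T.filter (fun i => i ∈ A), x i = s^(cA T) := by
        rw [show ∏ i ∈ T.filter (fun i => i ∈ A), x i
            = ∏ _i ∈ T.filter (fun i => i ∈ A), s from
          Finset.prod_congr rfl fun i hi => by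
            rw [hx]; simp [(Finset.mem_filter.1 hi).2]]
        rw [Finset.prod_const, e1]
      have p2 : ∏ i ∈ T.filter (fun i => ¬ i ∈ A), x i = t^(cB T) := by
        rw [show ∏ i ∈ T.filter (fun i => ¬ i ∈ A), x i
            = ∏ _i ∈ T.filter (fun i => ¬ i ∈ A), t from
          Finset.prod_congr rfl fun i hi => by
            rw [hx]; simp [(Finset.mem_filter.1 hi).2]]
        rw [Finset.prod_const, e2]
      rw [p1, p2]
    rw [show (∑ T : Finset α, (μ T : ℂ) * ∏ i ∈ T, x i)
        = ∑ T : Finset α, (μ T : ℂ) * (s^(cA T) * t^(cB T)) from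
      Finset.sum_congr rfl fun T _ => by rw [hprod T]]
    rw [keyC (fun j k => s^j * t^k)]
    simp only [Finset.sum_range_succ, Finset.sum_range_zero]
    unfold QP at h0
    linear_combination h0
  have hgoal := master (hqnn 0 0) (hqnn 1 0) (hqnn 2 0) (hqnn 0 1) (hqnn 1 1) (hqnn 2 1)
    (hqnn 0 2) (hqnn 1 2) (hqnn 2 2) (by linarith) (by linarith) (by linarith) hstab
  exact hgoal
end

section
/- Let G be a 4-regular 4-edge-connected multigraph whose minimum cuts have exactly 4 edges. Suppose S' is a cycle cut: the graph G_{S'} obtained by contracting the children S_1,...,S_k and the complement forms a cycle with exactly two parallel edges between consecutive contracted vertices. If a minimum cut S with S ⊊ S' equals S_i ∪ ... ∪ S_j for some 1 < i ≤ j < k, and T is any spanning tree of G that uses exactly one edge from each pair of parallel (companion) edges of the cycle, then |δ(S) ∩ T| = 2; in particular δ_T(S) is even. -/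
open Finset

/-- The set of edges joining the part labeled `a` to the part labeled `a + 1`
(cyclically), where `pt` assigns to each vertex its contracted part (part `0` is the
contracted complement, parts `1, …, k` are the children of the cycle cut). -/
def betweenConsecutive {V E : Type*} [Fintype E] {k : ℕ}
    (ends : E → V × V) (pt : V → Fin (k + 1)) (a : Fin (k + 1)) : Finset E :=
  Finset.univ.filter (fun e =>
    (pt (ends e).1 = a ∧ pt (ends e).2 = a + 1) ∨
    (pt (ends e).1 = a + 1 ∧ pt (ends e).2 = a))

set_option maxHeartbeats 1000000 in
/-- Let `G` be a 4-regular, 4-edge-connected multigraph whose minimum cuts have `4`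
edges, and let `S'` be a cycle cut: contracting the children `S_1, …, S_k` (the fibers of
`pt` over `1, …, k`) and the complement (the fiber over `0`) yields a cycle with exactly
two parallel (companion) edges between cyclically consecutive contracted vertices.  If a
minimum cut `S ⊊ S'` equals `S_i ∪ ⋯ ∪ S_j` for some `1 < i ≤ j < k`, and `T` is a
spanning tree of `G` using exactly one edge from each companion pair of the cycle, then
`|δ(S) ∩ T| = 2`; in particular `δ_T(S)` is even. -/
theorem interior_cycle_cut_even {V E : Type*}
    [Fintype V] [Fintype E] [DecidableEq V] [DecidableEq E]
    (ends : E → V × V) (hloop : ∀ e, (ends e).1 ≠ (ends e).2)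
    (hreg : ∀ v : V, (cutEdges ends ({v} : Finset V)).card = 4)
    (hconn : ∀ S : Finset V, S.Nonempty → S ≠ Finset.univ →
      4 ≤ (cutEdges ends S).card)
    (k : ℕ) (pt : V → Fin (k + 1))
    (hcross : ∀ e, pt (ends e).1 ≠ pt (ends e).2 →
      pt (ends e).2 = pt (ends e).1 + 1 ∨ pt (ends e).1 = pt (ends e).2 + 1)
    (hpairs : ∀ a : Fin (k + 1), (betweenConsecutive ends pt a).card = 2)
    (T : Finset E) (hspanning : (T.card : ℕ) = Fintype.card V - 1)
    (hT : ∀ a : Fin (k + 1), (T ∩ betweenConsecutive ends pt a).card = 1)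
    (i j : ℕ) (hi : 1 < i) (hij : i ≤ j) (hj : j < k)
    (S : Finset V)
    (hS : S = Finset.univ.filter (fun v => i ≤ (pt v : ℕ) ∧ (pt v : ℕ) ≤ j)) :
    (cutEdges ends S ∩ T).card = 2 ∧ Even (cutEdges ends S ∩ T).card := by
  have hk : 3 ≤ k := by omega
  obtain ⟨A, hAdef⟩ : ∃ A : Fin (k+1), A = ⟨i-1, by omega⟩ := ⟨_, rfl⟩
  obtain ⟨B, hBdef⟩ : ∃ B : Fin (k+1), B = ⟨j, by omega⟩ := ⟨_, rfl⟩
  have hAv : (A : ℕ) = i - 1 := by rw [hAdef]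
  have hBv : (B : ℕ) = j := by rw [hBdef]
  have hAlt : A < Fin.last k := by
    rw [Fin.lt_def, hAv, Fin.val_last]; omega
  have hBlt : B < Fin.last k := by
    rw [Fin.lt_def, hBv, Fin.val_last]; omega
  have hA1 : ((A + 1 : Fin (k+1)) : ℕ) = i := by
    have h1 : ((A + 1 : Fin (k+1)) : ℕ) = (A : ℕ) + 1 := Fin.val_add_one_of_lt hAlt
    rw [h1, hAv]; omega
  have hB1 : ((B + 1 : Fin (k+1)) : ℕ) = j + 1 := by
    have h1 : ((B + 1 : Fin (k+1)) : ℕ) = (B : ℕ) + 1 := Fin.val_add_one_of_lt hBlt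
    rw [h1, hBv]
  have hcut : cutEdges ends S =
      betweenConsecutive ends pt A ∪ betweenConsecutive ends pt B := by
    ext e
    simp only [cutEdges, betweenConsecutive, hS, Finset.mem_union, Finset.mem_filter,
      Finset.mem_univ, true_and, Fin.ext_iff, hA1, hB1, hAv, hBv]
    set x := pt (ends e).1 with hx
    set y := pt (ends e).2 with hy
    by_cases hxy : x = y
    · have hval : (x : ℕ) = (y : ℕ) := by rw [hxy]
      omega
    · have hxk : (x : ℕ) < k + 1 := x.isLt
      have hyk : (y : ℕ) < k + 1 := y.isLt
      rcases hcross e hxy with h | h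
      · have hmod : ((x : ℕ) = k ∧ (y : ℕ) = 0) ∨
            ((x : ℕ) < k ∧ (y : ℕ) = (x : ℕ) + 1) := by
          rcases Nat.lt_or_ge (x : ℕ) k with hlt | hge
          · right
            refine ⟨hlt, ?_⟩
            have hxlt : x < Fin.last k := by rw [Fin.lt_def, Fin.val_last]; exact hlt
            rw [← hx, ← hy] at h
            rw [h]
            exact Fin.val_add_one_of_lt hxlt
          · left
            have hxev : (x : ℕ) = k := by omega
            have hxlast : x = Fin.last k := by
              apply Fin.ext; rw [Fin.val_last]; exact hxev
            refine ⟨hxev, ?_⟩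
            rw [← hx, ← hy] at h
            rw [h, hxlast]
            have : (Fin.last k + 1 : Fin (k+1)) = 0 := by
              rw [Fin.last_add_one]
            rw [this, Fin.val_zero]
        omega
      · have hmod : ((y : ℕ) = k ∧ (x : ℕ) = 0) ∨
            ((y : ℕ) < k ∧ (x : ℕ) = (y : ℕ) + 1) := by
          rcases Nat.lt_or_ge (y : ℕ) k with hlt | hge
          · right
            refine ⟨hlt, ?_⟩
            have hylt : y < Fin.last k := by rw [Fin.lt_def, Fin.val_last]; exact hlt
            rw [← hx, ← hy] at h
            rw [h]
            exact Fin.val_add_one_of_lt hylt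
          · left
            have hyev : (y : ℕ) = k := by omega
            have hylast : y = Fin.last k := by
              apply Fin.ext; rw [Fin.val_last]; exact hyev
            refine ⟨hyev, ?_⟩
            rw [← hx, ← hy] at h
            rw [h, hylast]
            have : (Fin.last k + 1 : Fin (k+1)) = 0 := by
              rw [Fin.last_add_one]
            rw [this, Fin.val_zero]
        omega
  have hdisj : Disjoint (betweenConsecutive ends pt A) (betweenConsecutive ends pt B) := by
    rw [Finset.disjoint_left]
    intro e he1 he2
    simp only [betweenConsecutive, Finset.mem_filter, Finset.mem_univ, true_and,
      Fin.ext_iff, hA1, hB1, hAv, hBv] at he1 he2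
    rcases he1 with ⟨h1, h2⟩ | ⟨h1, h2⟩ <;> rcases he2 with ⟨h3, h4⟩ | ⟨h3, h4⟩ <;> omega
  have hcard : (cutEdges ends S ∩ T).card = 2 := by
    rw [hcut, Finset.union_inter_distrib_right,
      Finset.card_union_of_disjoint (hdisj.mono
        Finset.inter_subset_left Finset.inter_subset_left),
      Finset.inter_comm (betweenConsecutive ends pt A) T,
      Finset.inter_comm (betweenConsecutive ends pt B) T, hT A, hT B]
  exact ⟨hcard, hcard ▸ (by decide)⟩
end
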